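/- arXiv:1909.03864 — 7 statements merged into one kernel-verified Lean document; each statement's English description precedes it below -/
import Mathlib

section
/- Let α, β > 0 and γ ≥ 0, and let (u,f) be a twice continuously differentiable solution on (0,∞) of u'' = (αβ/2) f² u + u(u²−1)/r² and f'' = −(2/r) f' + (β/r²) f u² + γ f(f²−1), satisfying 0 ≤ u(r) ≤ 1 and 0 ≤ f(r) ≤ 1 for all r > 0, with lim_{r→0} u(r)=1, lim_{r→0} f(r)=0, lim_{r→∞} u(r)=0, lim_{r→∞} f(r)=1, such that u and f are not identically 0 or identically 1. Then the strict inequalities 0 < u(r) < 1 and 0 < f(r) < 1 hold for every r > 0. -/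
/-!
At a zero `r₀ > 0` of `u`, the bound `u ≥ 0` makes `r₀` an interior minimum, so `u'(r₀) = 0`
too. Along the given solution the `u`-equation is the linear equation
`u'' = (αβ/2 f² + (u² - 1)/r²) u`, whose coefficient is bounded on every `[a, ∞)` with `a > 0`,
so uniqueness for linear ODEs gives `u ≡ 0`. The same works for `f`. At a point where `u = 1`,
`u` has an interior maximum although `u'' = (αβ/2) f² > 0` there; likewise `f = 1` would give
an interior maximum with `f'' = β u²/r² > 0`.
-/

open MeasureTheory Filter Set Topology

noncomputable section

/-- `(u,f)` is a (twice continuously differentiable) classical solution on `(0,∞)` of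
`u'' = (αβ/2) f² u + u(u²−1)/r²` and `f'' = −(2/r) f' + (β/r²) f u² + γ f(f²−1)`,
with first derivatives `u'`, `f'`. -/
def SolvesODE (α β γ : ℝ) (u u' f f' : ℝ → ℝ) : Prop :=
  ∀ r : ℝ, 0 < r →
    HasDerivAt u (u' r) r ∧ HasDerivAt f (f' r) r ∧
    HasDerivAt u' (α * β / 2 * f r ^ 2 * u r + u r * (u r ^ 2 - 1) / r ^ 2) r ∧
    HasDerivAt f' (-(2 / r) * f' r + β / r ^ 2 * f r * u r ^ 2
        + γ * f r * (f r ^ 2 - 1)) r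

theorem IsLocalMax.hasDerivAt_deriv_nonpos {g g' : ℝ → ℝ} {x₀ c : ℝ} (h : IsLocalMax g x₀)
    (hg : ∀ᶠ x in 𝓝 x₀, HasDerivAt g (g' x) x) (hg' : HasDerivAt g' c x₀) : c ≤ 0 := by
  have hc : deriv (deriv g) x₀ = c :=
    (EventuallyEq.deriv_eq (hg.mono fun x hx => hx.deriv)).trans hg'.deriv
  -- if `c > 0`, the second-derivative test makes `x₀` a local minimum too, so `g` is locally
  -- constant and `c = 0`
  by_contra! hpos
  rw [← hc] at hpos
  have hmin := isLocalMin_of_deriv_deriv_pos hpos h.deriv_eq_zero hg.self_of_nhds.continuousAt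
  have hconst : g =ᶠ[𝓝 x₀] fun _ => g x₀ := (hmin.and h).mono fun x hx => le_antisymm hx.2 hx.1
  have hderiv : deriv g =ᶠ[𝓝 x₀] fun _ => 0 :=
    hconst.eventuallyEq_nhds.mono fun x hx => hx.deriv_eq.trans (deriv_const x _)
  simp [hderiv.deriv_eq] at hpos

theorem eqOn_zero_of_hasDerivAt_linear_Ioo {y y' p q : ℝ → ℝ} {a b t₀ K : ℝ}
    (hy : ∀ t ∈ Ioo a b, HasDerivAt y (y' t) t)
    (hy' : ∀ t ∈ Ioo a b, HasDerivAt y' (p t * y' t + q t * y t) t)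
    (hpq : ∀ t ∈ Ioo a b, |p t| + |q t| ≤ K) (ht₀ : t₀ ∈ Ioo a b)
    (h₀ : y t₀ = 0) (h₀' : y' t₀ = 0) : EqOn y 0 (Ioo a b) := by
  let v : ℝ → ℝ × ℝ → ℝ × ℝ := fun t x => (x.2, p t * x.2 + q t * x.1)
  have hK : 0 ≤ K := (add_nonneg (abs_nonneg _) (abs_nonneg _)).trans (hpq t₀ ht₀)
  have hv : ∀ t ∈ Ioo a b, LipschitzOnWith (Real.toNNReal (1 + K)) (v t) univ := by
    intro t ht
    refine (LipschitzWith.of_dist_le_mul fun x x' => ?_).lipschitzOnWith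
    rw [Real.coe_toNNReal _ (by linarith)]
    simp only [v, Prod.dist_eq, Real.dist_eq]
    set d := max |x.1 - x'.1| |x.2 - x'.2|
    have h1 : |x.1 - x'.1| ≤ d := le_max_left _ _
    have h2 : |x.2 - x'.2| ≤ d := le_max_right _ _
    have hd : 0 ≤ d := (abs_nonneg _).trans h1
    have hcomb : |p t * x.2 + q t * x.1 - (p t * x'.2 + q t * x'.1)| ≤ K * d :=
      calc |p t * x.2 + q t * x.1 - (p t * x'.2 + q t * x'.1)|
          = |p t * (x.2 - x'.2) + q t * (x.1 - x'.1)| := by ring_nf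
        _ ≤ |p t| * |x.2 - x'.2| + |q t| * |x.1 - x'.1| := by
            rw [← abs_mul, ← abs_mul]; exact abs_add_le _ _
        _ ≤ (|p t| + |q t|) * d := by
            nlinarith [abs_nonneg (p t), abs_nonneg (q t)]
        _ ≤ K * d := mul_le_mul_of_nonneg_right (hpq t ht) hd
    have hKd : 0 ≤ K * d := mul_nonneg hK hd
    exact max_le (by linarith) (by linarith)
  have hsol := ODE_solution_unique_of_mem_Ioo (f := fun t => (y t, y' t)) (g := fun _ => 0) hv ht₀
    (fun t ht => ⟨(hy t ht).prodMk (hy' t ht), mem_univ _⟩)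
    (fun t _ => ⟨(hasDerivAt_const t _).congr_deriv (by ext <;> simp [v]), mem_univ _⟩)
    (by simp [h₀, h₀'])
  exact fun t ht => congrArg Prod.fst (hsol ht)

theorem eqOn_zero_of_hasDerivAt_linear_Ioi {y y' p q : ℝ → ℝ} {t₀ : ℝ}
    (hy : ∀ t ∈ Ioi 0, HasDerivAt y (y' t) t)
    (hy' : ∀ t ∈ Ioi 0, HasDerivAt y' (p t * y' t + q t * y t) t)
    (hpq : ∀ a > 0, ∃ K, ∀ t ≥ a, |p t| + |q t| ≤ K) (ht₀ : 0 < t₀)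
    (h₀ : y t₀ = 0) (h₀' : y' t₀ = 0) : EqOn y 0 (Ioi 0) := by
  intro t (ht : 0 < t)
  obtain ⟨K, hK⟩ := hpq (min t t₀ / 2) (by positivity)
  have hpos : ∀ s ∈ Ioo (min t t₀ / 2) (max t t₀ + 1), s ∈ Ioi 0 :=
    fun s hs => lt_trans (by positivity) hs.1
  have hmem : ∀ s, 0 < s → s ≤ max t t₀ → min t t₀ ≤ s → s ∈ Ioo (min t t₀ / 2) (max t t₀ + 1) :=
    fun s hs hs₁ hs₂ => ⟨by linarith [min_le_left t t₀], by linarith⟩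
  exact eqOn_zero_of_hasDerivAt_linear_Ioo (fun s hs => hy s (hpos s hs))
    (fun s hs => hy' s (hpos s hs)) (fun s hs => hK s hs.1.le)
    (hmem t₀ ht₀ (le_max_right _ _) (min_le_right _ _)) h₀ h₀'
    (hmem t ht (le_max_left _ _) (min_le_left _ _))

lemma abs_sq_sub_one_le_one {x : ℝ} (h₀ : 0 ≤ x) (h₁ : x ≤ 1) : |x ^ 2 - 1| ≤ 1 :=
  abs_le.mpr ⟨by nlinarith, by nlinarith⟩

namespace SolvesODE

variable {α β γ : ℝ} {u u' f f' : ℝ → ℝ}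

theorem u_eqOn_zero (hsol : SolvesODE α β γ u u' f f')
    (hu01 : ∀ r : ℝ, 0 < r → 0 ≤ u r ∧ u r ≤ 1) (hf01 : ∀ r : ℝ, 0 < r → 0 ≤ f r ∧ f r ≤ 1)
    {r₀ : ℝ} (hr₀ : 0 < r₀) (h : u r₀ = 0) : EqOn u 0 (Ioi 0) := by
  have hmin : IsLocalMin u r₀ := by
    filter_upwards [Ioi_mem_nhds hr₀] with t ht
    exact h ▸ (hu01 t ht).1
  refine eqOn_zero_of_hasDerivAt_linear_Ioi (p := 0)
    (q := fun r => α * β / 2 * f r ^ 2 + (u r ^ 2 - 1) / r ^ 2)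
    (fun r hr => (hsol r hr).1)
    (fun r hr => (hsol r hr).2.2.1.congr_deriv (by rw [Pi.zero_apply, zero_mul, zero_add]; ring))
    (fun a ha => ⟨|α * β / 2| + 1 / a ^ 2, fun t ht => ?_⟩) hr₀ h
    (hmin.hasDerivAt_eq_zero (hsol r₀ hr₀).1)
  have ht0 : 0 < t := ha.trans_le ht
  obtain ⟨hu₀, hu₁⟩ := hu01 t ht0
  obtain ⟨hf₀, hf₁⟩ := hf01 t ht0
  calc |(0 : ℝ → ℝ) t| + |α * β / 2 * f t ^ 2 + (u t ^ 2 - 1) / t ^ 2|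
      ≤ |α * β / 2| * f t ^ 2 + |u t ^ 2 - 1| / t ^ 2 := by
        have := abs_add_le (α * β / 2 * f t ^ 2) ((u t ^ 2 - 1) / t ^ 2)
        rw [abs_mul (α * β / 2), abs_div _ (t ^ 2), abs_of_nonneg (sq_nonneg (f t)),
          abs_of_pos (pow_pos ht0 2)] at this
        rwa [Pi.zero_apply, abs_zero, zero_add]
    _ ≤ |α * β / 2| * 1 + 1 / a ^ 2 :=
        add_le_add (mul_le_mul_of_nonneg_left (pow_le_one₀ hf₀ hf₁) (abs_nonneg _))
          (div_le_div₀ zero_le_one (abs_sq_sub_one_le_one hu₀ hu₁) (by positivity)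
            (pow_le_pow_left₀ ha.le ht 2))
    _ = |α * β / 2| + 1 / a ^ 2 := by rw [mul_one]

theorem f_eqOn_zero (hsol : SolvesODE α β γ u u' f f')
    (hu01 : ∀ r : ℝ, 0 < r → 0 ≤ u r ∧ u r ≤ 1) (hf01 : ∀ r : ℝ, 0 < r → 0 ≤ f r ∧ f r ≤ 1)
    {r₀ : ℝ} (hr₀ : 0 < r₀) (h : f r₀ = 0) : EqOn f 0 (Ioi 0) := by
  have hmin : IsLocalMin f r₀ := by
    filter_upwards [Ioi_mem_nhds hr₀] with t ht
    exact h ▸ (hf01 t ht).1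
  refine eqOn_zero_of_hasDerivAt_linear_Ioi (p := fun r => -(2 / r))
    (q := fun r => β / r ^ 2 * u r ^ 2 + γ * (f r ^ 2 - 1))
    (fun r hr => (hsol r hr).2.1) (fun r hr => (hsol r hr).2.2.2.congr_deriv (by ring))
    (fun a ha => ⟨2 / a + |β| / a ^ 2 + |γ|, fun t ht => ?_⟩) hr₀ h
    (hmin.hasDerivAt_eq_zero (hsol r₀ hr₀).2.1)
  have ht0 : 0 < t := ha.trans_le ht
  obtain ⟨hu₀, hu₁⟩ := hu01 t ht0
  obtain ⟨hf₀, hf₁⟩ := hf01 t ht0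
  calc |-(2 / t)| + |β / t ^ 2 * u t ^ 2 + γ * (f t ^ 2 - 1)|
      ≤ 2 / t + |β| / t ^ 2 * u t ^ 2 + |γ| * |f t ^ 2 - 1| := by
        have := abs_add_le (β / t ^ 2 * u t ^ 2) (γ * (f t ^ 2 - 1))
        simp only [abs_neg, abs_mul, abs_div, abs_of_pos ht0, abs_of_pos (pow_pos ht0 2),
          abs_of_nonneg (sq_nonneg (u t))] at this ⊢
        linarith
    _ ≤ 2 / a + |β| / a ^ 2 * 1 + |γ| * 1 := by
        gcongr
        · exact pow_le_one₀ hu₀ hu₁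
        · exact abs_sq_sub_one_le_one hf₀ hf₁
    _ = 2 / a + |β| / a ^ 2 + |γ| := by ring

theorem u_lt_one (hα : 0 < α) (hβ : 0 < β) (hsol : SolvesODE α β γ u u' f f')
    (hu1 : ∀ r : ℝ, 0 < r → u r ≤ 1) {r : ℝ} (hr : 0 < r) (hf : 0 < f r) : u r < 1 := by
  refine (hu1 r hr).lt_of_ne fun h => ?_
  have hmax : IsLocalMax u r := by
    filter_upwards [Ioi_mem_nhds hr] with t ht
    exact h ▸ hu1 t ht
  have hu'' := hmax.hasDerivAt_deriv_nonpos
    (by filter_upwards [Ioi_mem_nhds hr] with t ht using (hsol t ht).1) (hsol r hr).2.2.1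
  rw [h, one_pow, sub_self, mul_zero, zero_div, add_zero, mul_one] at hu''
  have : 0 < α * β / 2 * f r ^ 2 := by positivity
  linarith

theorem f_lt_one (hβ : 0 < β) (hsol : SolvesODE α β γ u u' f f')
    (hf1 : ∀ r : ℝ, 0 < r → f r ≤ 1) {r : ℝ} (hr : 0 < r) (hu : 0 < u r) : f r < 1 := by
  refine (hf1 r hr).lt_of_ne fun h => ?_
  have hmax : IsLocalMax f r := by
    filter_upwards [Ioi_mem_nhds hr] with t ht
    exact h ▸ hf1 t ht
  have hf'' := hmax.hasDerivAt_deriv_nonpos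
    (by filter_upwards [Ioi_mem_nhds hr] with t ht using (hsol t ht).2.1) (hsol r hr).2.2.2
  rw [hmax.hasDerivAt_eq_zero (hsol r hr).2.1, h] at hf''
  have : 0 < β / r ^ 2 * u r ^ 2 := by positivity
  linarith

end SolvesODE

theorem strict_bounds_general (α β γ : ℝ) (hα : 0 < α) (hβ : 0 < β)
    (u u' f f' : ℝ → ℝ) (hsol : SolvesODE α β γ u u' f f')
    (hu01 : ∀ r : ℝ, 0 < r → 0 ≤ u r ∧ u r ≤ 1)
    (hf01 : ∀ r : ℝ, 0 < r → 0 ≤ f r ∧ f r ≤ 1)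
    (hu_ne0 : ¬ ∀ r : ℝ, 0 < r → u r = 0)
    (hf_ne0 : ¬ ∀ r : ℝ, 0 < r → f r = 0) :
    ∀ r : ℝ, 0 < r → 0 < u r ∧ u r < 1 ∧ 0 < f r ∧ f r < 1 := by
  have hu_pos : ∀ r : ℝ, 0 < r → 0 < u r := fun r hr =>
    (hu01 r hr).1.lt_of_ne' fun h => hu_ne0 fun s hs => hsol.u_eqOn_zero hu01 hf01 hr h hs
  have hf_pos : ∀ r : ℝ, 0 < r → 0 < f r := fun r hr =>
    (hf01 r hr).1.lt_of_ne' fun h => hf_ne0 fun s hs => hsol.f_eqOn_zero hu01 hf01 hr h hs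
  intro r hr
  exact ⟨hu_pos r hr, hsol.u_lt_one hα hβ (fun s hs => (hu01 s hs).2) hr (hf_pos r hr),
    hf_pos r hr, hsol.f_lt_one hβ (fun s hs => (hf01 s hs).2) hr (hu_pos r hr)⟩

/-- a solution with `0 ≤ u,f ≤ 1`, the full boundary conditions, and
`u`, `f` not identically `0` or `1`, satisfies the strict bounds `0 < u < 1`,
`0 < f < 1` on `(0,∞)`. -/
theorem strict_bounds (α β γ : ℝ) (hα : 0 < α) (hβ : 0 < β) (hγ : 0 ≤ γ)
    (u u' f f' : ℝ → ℝ) (hsol : SolvesODE α β γ u u' f f')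
    (hu01 : ∀ r : ℝ, 0 < r → 0 ≤ u r ∧ u r ≤ 1)
    (hf01 : ∀ r : ℝ, 0 < r → 0 ≤ f r ∧ f r ≤ 1)
    (hu0 : Tendsto u (𝓝[>] (0 : ℝ)) (𝓝 1))
    (hf0 : Tendsto f (𝓝[>] (0 : ℝ)) (𝓝 0))
    (huinf : Tendsto u atTop (𝓝 0))
    (hfinf : Tendsto f atTop (𝓝 1))
    (hu_ne0 : ¬ ∀ r : ℝ, 0 < r → u r = 0)
    (hu_ne1 : ¬ ∀ r : ℝ, 0 < r → u r = 1)
    (hf_ne0 : ¬ ∀ r : ℝ, 0 < r → f r = 0)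
    (hf_ne1 : ¬ ∀ r : ℝ, 0 < r → f r = 1) :
    ∀ r : ℝ, 0 < r → 0 < u r ∧ u r < 1 ∧ 0 < f r ∧ f r < 1 :=
  strict_bounds_general α β γ hα hβ u u' f f' hsol hu01 hf01 hu_ne0 hf_ne0
end
end

section
/- Let α, β > 0 and γ ≥ 0, and let (u,f) be a twice continuously differentiable solution on (0,∞) of u'' = (αβ/2) f² u + u(u²−1)/r² and f'' = −(2/r) f' + (β/r²) f u² + γ f(f²−1), with 0 < u(r) < 1 and 0 < f(r) < 1 for all r > 0 and lim_{r→∞} u(r) = 0, lim_{r→∞} f(r) = 1. Then for every ε ∈ (0,1) there exist constants C > 0 and R > 0 such that u(r) ≤ C·exp(−√(αβ/2)·(1−ε)·r) for all r ≥ R. -/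
/-!
Since `f → 1` and `u(u² - 1)/r² = O(1/r²)`, for any `k < √(αβ/2)` the equation gives
`u'' ≥ k² u` on some `[R, ∞)`. Then `p = u' + k u` satisfies `p' ≥ k p`, so `e^{-kr} p` is
nondecreasing. If `p` were ever positive it would grow like `e^{kr}`, forcing `u' → ∞` and
contradicting `u < 1`; hence `p ≤ 0`, i.e. `e^{kr} u` is nonincreasing on `[R, ∞)`.
-/

open MeasureTheory Filter Set Topology

noncomputable section

open Real

section Ici

variable {g g' : ℝ → ℝ} {R : ℝ}

lemma monotoneOn_Ici_of_hasDerivAt_nonneg (hg : ∀ r ≥ R, HasDerivAt g (g' r) r)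
    (hg' : ∀ r > R, 0 ≤ g' r) : MonotoneOn g (Ici R) :=
  monotoneOn_of_hasDerivWithinAt_nonneg (convex_Ici R)
    (fun r hr => (hg r hr).continuousAt.continuousWithinAt)
    (by rw [interior_Ici]; exact fun r hr => (hg r hr.le).hasDerivWithinAt)
    (by rw [interior_Ici]; exact hg')

lemma antitoneOn_Ici_of_hasDerivAt_nonpos (hg : ∀ r ≥ R, HasDerivAt g (g' r) r)
    (hg' : ∀ r > R, g' r ≤ 0) : AntitoneOn g (Ici R) :=
  antitoneOn_of_hasDerivWithinAt_nonpos (convex_Ici R)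
    (fun r hr => (hg r hr).continuousAt.continuousWithinAt)
    (by rw [interior_Ici]; exact fun r hr => (hg r hr.le).hasDerivWithinAt)
    (by rw [interior_Ici]; exact hg')

lemma exists_lt_of_one_le_hasDerivAt (hg : ∀ r ≥ R, HasDerivAt g (g' r) r)
    (hg' : ∀ r ≥ R, 1 ≤ g' r) (M : ℝ) : ∃ r ≥ R, M < g r := by
  have hmono : MonotoneOn (fun r => g r - r) (Ici R) :=
    monotoneOn_Ici_of_hasDerivAt_nonneg (fun r hr => (hg r hr).sub (hasDerivAt_id r))
      (fun r hr => sub_nonneg.mpr (hg' r hr.le))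
  set T := max (M - g R + 1) 0
  have hT : g R - R ≤ g (R + T) - (R + T) :=
    hmono self_mem_Ici (by simp [T]) (by simp [T])
  exact ⟨R + T, by simp [T], by linarith [le_max_left (M - g R + 1) 0]⟩

end Ici

section SecondOrder

variable {u u' u'' : ℝ → ℝ} {k R : ℝ}
  (hu : ∀ r ≥ R, HasDerivAt u (u' r) r) (hu' : ∀ r ≥ R, HasDerivAt u' (u'' r) r)

include hu hu' in
/-- With `p = u' + k u` the inequality `u'' ≥ k² u` reads `p' ≥ k p`. -/
lemma monotoneOn_exp_neg_mul_mul_deriv_add (hineq : ∀ r ≥ R, k ^ 2 * u r ≤ u'' r) :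
    MonotoneOn (fun r => exp (-(k * r)) * (u' r + k * u r)) (Ici R) := by
  refine monotoneOn_Ici_of_hasDerivAt_nonneg
    (g' := fun r => exp (-(k * r)) * (u'' r - k ^ 2 * u r)) (fun r hr => ?_)
    (fun r hr => mul_nonneg (exp_pos _).le (sub_nonneg.mpr (hineq r hr.le)))
  have hp : HasDerivAt (fun s => u' s + k * u s) (u'' r + k * u' r) r :=
    (hu' r hr).add ((hu r hr).const_mul k)
  have he : HasDerivAt (fun s => exp (-(k * s))) (exp (-(k * r)) * -(k * 1)) r :=
    ((hasDerivAt_id' r).const_mul k).neg.exp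
  exact (he.mul hp).congr_deriv (by ring)

include hu in
lemma le_mul_exp_neg_of_deriv_add_mul_nonpos (hp : ∀ r ≥ R, u' r + k * u r ≤ 0) :
    ∀ r ≥ R, u r ≤ u R * exp (-(k * (r - R))) := by
  have hanti : AntitoneOn (fun r => exp (k * r) * u r) (Ici R) := by
    refine antitoneOn_Ici_of_hasDerivAt_nonpos
      (g' := fun r => exp (k * r) * (u' r + k * u r)) (fun r hr => ?_)
      (fun r hr => mul_nonpos_of_nonneg_of_nonpos (exp_pos _).le (hp r hr.le))
    have he : HasDerivAt (fun s => exp (k * s)) (exp (k * r) * (k * 1)) r :=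
      ((hasDerivAt_id' r).const_mul k).exp
    exact (he.mul (hu r hr)).congr_deriv (by ring)
  intro r hr
  have h := hanti self_mem_Ici hr hr
  rw [show -(k * (r - R)) = k * R - k * r by ring, exp_sub, mul_div_assoc',
    le_div_iff₀ (exp_pos _)]
  simpa only [mul_comm] using h

include hu hu' in
/-- Where `u' + k u` is positive it grows like `e^{kr}` from then on, forcing `u' → ∞`. -/
lemma deriv_add_mul_nonpos_of_bddAbove (hk : 0 < k) (hineq : ∀ r ≥ R, k ^ 2 * u r ≤ u'' r)
    {M : ℝ} (hM : ∀ r ≥ R, u r ≤ M) : ∀ r ≥ R, u' r + k * u r ≤ 0 := by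
  by_contra! ⟨r₀, hr₀, hp₀⟩
  set c := exp (-(k * r₀)) * (u' r₀ + k * u r₀)
  have hc : 0 < c := mul_pos (exp_pos _) hp₀
  have hgrowth : ∀ r ≥ r₀, c * exp (k * r) - k * M ≤ u' r := by
    intro r hr
    have h : c ≤ exp (-(k * r)) * (u' r + k * u r) :=
      monotoneOn_exp_neg_mul_mul_deriv_add hu hu' hineq hr₀ (hr₀.trans hr) hr
    have h' : exp (k * r) * c ≤ u' r + k * u r := by
      rwa [exp_neg, le_inv_mul_iff₀ (exp_pos _)] at h
    nlinarith [hM r (hr₀.trans hr)]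
  have hlim : Tendsto (fun r => c * exp (k * r) - k * M) atTop atTop :=
    tendsto_atTop_add_const_right _ _
      ((tendsto_exp_atTop.comp (tendsto_id.const_mul_atTop hk)).const_mul_atTop hc)
  obtain ⟨r₁, hr₁⟩ := eventually_atTop.mp (hlim.eventually_ge_atTop 1)
  set r₂ := max r₁ r₀
  obtain ⟨r, hr, hMr⟩ := exists_lt_of_one_le_hasDerivAt (R := r₂)
    (fun r hr => hu r (hr₀.trans ((le_max_right _ _).trans hr)))
    (fun r hr => (hr₁ r ((le_max_left _ _).trans hr)).trans
      (hgrowth r ((le_max_right _ _).trans hr))) M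
  linarith [hM r (hr₀.trans ((le_max_right _ _).trans hr))]

include hu hu' in
lemma le_mul_exp_neg_of_sq_mul_le_second_deriv (hk : 0 < k)
    (hineq : ∀ r ≥ R, k ^ 2 * u r ≤ u'' r) {M : ℝ} (hM : ∀ r ≥ R, u r ≤ M) :
    ∀ r ≥ R, u r ≤ u R * exp (-(k * (r - R))) :=
  le_mul_exp_neg_of_deriv_add_mul_nonpos hu
    (deriv_add_mul_nonpos_of_bddAbove hu hu' hk hineq hM)

end SecondOrder

lemma eventually_sq_mul_le_ode_rhs {a k : ℝ} {u f : ℝ → ℝ} (hk : k ^ 2 < a)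
    (hu01 : ∀ r : ℝ, 0 < r → 0 < u r ∧ u r < 1) (hf : Tendsto f atTop (𝓝 1)) :
    ∀ᶠ r in atTop, k ^ 2 * u r ≤ a * f r ^ 2 * u r + u r * (u r ^ 2 - 1) / r ^ 2 := by
  have hlim : Tendsto (fun r : ℝ => a * f r ^ 2 - (r ^ 2)⁻¹) atTop (𝓝 (a * 1 ^ 2 - 0)) :=
    ((hf.pow 2).const_mul a).sub
      (tendsto_inv_atTop_zero.comp (tendsto_pow_atTop two_ne_zero))
  rw [one_pow, mul_one, sub_zero] at hlim
  filter_upwards [hlim.eventually (eventually_gt_nhds hk), eventually_gt_atTop 0]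
    with r hr hr₀
  obtain ⟨hu0, hu1⟩ := hu01 r hr₀
  have hrem : -(r ^ 2)⁻¹ ≤ (u r ^ 2 - 1) / r ^ 2 := by
    rw [div_eq_mul_inv, neg_eq_neg_one_mul]
    exact mul_le_mul_of_nonneg_right (by nlinarith) (by positivity)
  calc k ^ 2 * u r ≤ (a * f r ^ 2 + (u r ^ 2 - 1) / r ^ 2) * u r := by
        gcongr; linarith
    _ = a * f r ^ 2 * u r + u r * (u r ^ 2 - 1) / r ^ 2 := by ring

theorem u_exponential_decay_general (α β γ : ℝ) (hα : 0 < α) (hβ : 0 < β)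
    (u u' f f' : ℝ → ℝ) (hsol : SolvesODE α β γ u u' f f')
    (hu01 : ∀ r : ℝ, 0 < r → 0 < u r ∧ u r < 1)
    (hfinf : Tendsto f atTop (𝓝 1)) :
    ∀ ε : ℝ, 0 < ε → ε < 1 →
      ∃ C > (0 : ℝ), ∃ R > (0 : ℝ), ∀ r : ℝ, R ≤ r →
        u r ≤ C * Real.exp (-(Real.sqrt (α * β / 2) * (1 - ε) * r)) := by
  intro ε hε0 hε1
  have ha : 0 < α * β / 2 := by positivity
  set k := √(α * β / 2) * (1 - ε)
  have hk : 0 < k := mul_pos (sqrt_pos.mpr ha) (by linarith)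
  have hk2 : k ^ 2 < α * β / 2 := by
    rw [mul_pow, sq_sqrt ha.le]
    exact mul_lt_of_lt_one_right ha (by nlinarith)
  obtain ⟨R, hR⟩ := eventually_atTop.mp
    ((eventually_sq_mul_le_ode_rhs hk2 hu01 hfinf).and (eventually_gt_atTop 0))
  have hpos : ∀ r ≥ R, 0 < r := fun r hr => (hR r hr).2
  refine ⟨exp (k * R), exp_pos _, R, hpos R le_rfl, fun r hr => ?_⟩
  calc u r ≤ u R * exp (-(k * (r - R))) :=
        le_mul_exp_neg_of_sq_mul_le_second_deriv
          (fun r hr => (hsol r (hpos r hr)).1) (fun r hr => (hsol r (hpos r hr)).2.2.1) hk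
          (fun r hr => (hR r hr).1) (fun r hr => (hu01 r (hpos r hr)).2.le) r hr
    _ ≤ 1 * exp (k * R + -(k * r)) := by
        rw [show k * R + -(k * r) = -(k * (r - R)) by ring]
        gcongr
        exact (hu01 R (hpos R le_rfl)).2.le
    _ = exp (k * R) * exp (-(k * r)) := by rw [one_mul, exp_add]

/-- exponential decay of `u` at infinity:
`u(r) ≤ C exp(−√(αβ/2)(1−ε) r)` for `r` large. -/
theorem u_exponential_decay (α β γ : ℝ) (hα : 0 < α) (hβ : 0 < β) (hγ : 0 ≤ γ)
    (u u' f f' : ℝ → ℝ) (hsol : SolvesODE α β γ u u' f f')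
    (hu01 : ∀ r : ℝ, 0 < r → 0 < u r ∧ u r < 1)
    (hf01 : ∀ r : ℝ, 0 < r → 0 < f r ∧ f r < 1)
    (huinf : Tendsto u atTop (𝓝 0))
    (hfinf : Tendsto f atTop (𝓝 1)) :
    ∀ ε : ℝ, 0 < ε → ε < 1 →
      ∃ C > (0 : ℝ), ∃ R > (0 : ℝ), ∀ r : ℝ, R ≤ r →
        u r ≤ C * Real.exp (-(Real.sqrt (α * β / 2) * (1 - ε) * r)) :=
  u_exponential_decay_general α β γ hα hβ u u' f f' hsol hu01 hfinf
end
end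

section
/- Let α, β, γ > 0, and let (u,f) be a twice continuously differentiable solution on (0,∞) of u'' = (αβ/2) f² u + u(u²−1)/r² and f'' = −(2/r) f' + (β/r²) f u² + γ f(f²−1), with 0 < u(r) < 1 and 0 < f(r) < 1 for all r > 0, lim_{r→∞} u(r) = 0 and lim_{r→∞} f(r) = 1. Then for every ε ∈ (0,1) there exist constants C > 0 and R > 0 such that 1 − f(r) ≤ C·exp(−√2·min{√γ, √(αβ)}·(1−ε)·r) for all r ≥ R. -/
/-!
The key tool is a comparison principle: if `g'' ≥ k² g` near infinity and `g = o(e^{kr})`, then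
`g = O(e^{-kr})`. Indeed `e^{-kr} (g' + k g)` is nondecreasing, and if it ever became positive,
integrating `(e^{kr} g)' = e^{kr} (g' + k g)` would force `g ≳ e^{kr}`; hence `g' + k g ≤ 0`, i.e.
`e^{kr} g` is nonincreasing.

Since `f → 1`, the `u`-equation gives `u'' ≥ c² u` for any `c² < αβ/2`, so `u = O(e^{-cr})`.
The function `w = r (1 - f)` satisfies `w'' = γ f (1 + f) w - β f u² / r`, where `γ f (1 + f) → 2γ`
and the forcing term is `O(e^{-2cr})`; adding a multiple of `e^{-2cr}` to `w` produces a function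
to which the comparison principle applies at every rate `k < min (√(2γ)) (2c)`.
-/

open MeasureTheory Filter Set Topology

noncomputable section

open Real Asymptotics

lemma monotoneOn_Ici_of_hasDerivAt {h h' : ℝ → ℝ} {R : ℝ}
    (hh : ∀ r, R ≤ r → HasDerivAt h (h' r) r) (hh' : ∀ r, R ≤ r → 0 ≤ h' r) :
    MonotoneOn h (Ici R) :=
  monotoneOn_of_hasDerivWithinAt_nonneg (convex_Ici R)
    (fun r hr => (hh r hr).continuousAt.continuousWithinAt)
    (fun r hr => (hh r (interior_subset hr)).hasDerivWithinAt)
    (fun r hr => hh' r (interior_subset hr))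

lemma isLittleO_exp_mul_of_abs_le_mul {g : ℝ → ℝ} {k B : ℝ} (hk : 0 < k)
    (h : ∀ᶠ r in atTop, |g r| ≤ B * r) : g =o[atTop] fun r => exp (k * r) := by
  refine (IsBigO.of_bound B ?_).trans_isLittleO
    (by simpa using isLittleO_pow_exp_pos_mul_atTop 1 hk)
  filter_upwards [h, eventually_ge_atTop 0] with r hr hr0
  rwa [norm_eq_abs, norm_of_nonneg hr0]

lemma exists_pos_forall_le_of_eventually_le {x : ℝ → ℝ} {a C : ℝ}
    (h : ∀ᶠ r in atTop, x r ≤ C * exp (-(a * r))) :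
    ∃ C > (0 : ℝ), ∃ R > (0 : ℝ), ∀ r, R ≤ r → x r ≤ C * exp (-(a * r)) := by
  obtain ⟨R, hR⟩ := eventually_atTop.1 h
  refine ⟨max C 1, by positivity, max R 1, by positivity, fun r hr => ?_⟩
  exact (hR r (le_of_max_le_left hr)).trans
    (mul_le_mul_of_nonneg_right (le_max_left _ _) (exp_pos _).le)

lemma eventually_sq_le_of_le_mul_exp {v : ℝ → ℝ} {C c : ℝ} (hv0 : ∀ᶠ r in atTop, 0 ≤ v r)
    (hv : ∀ᶠ r in atTop, v r ≤ C * exp (-(c * r))) :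
    ∀ᶠ r in atTop, v r ^ 2 ≤ C ^ 2 * exp (-(2 * c * r)) := by
  filter_upwards [hv0, hv] with r hr0 hr
  calc v r ^ 2 ≤ (C * exp (-(c * r))) ^ 2 := pow_le_pow_left₀ hr0 hr 2
    _ = C ^ 2 * exp (-(2 * c * r)) := by rw [mul_pow, ← exp_nat_mul]; push_cast; ring_nf

section Comparison

variable {g g' g'' : ℝ → ℝ} {k R : ℝ}

theorem exists_pos_mul_exp_sq_add_le_of_deriv_add_mul_pos (hk : 0 < k)
    (hg : ∀ r, R ≤ r → HasDerivAt g (g' r) r) (hg' : ∀ r, R ≤ r → HasDerivAt g' (g'' r) r)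
    (hineq : ∀ r, R ≤ r → k ^ 2 * g r ≤ g'' r) {r₀ : ℝ} (hr₀ : R ≤ r₀)
    (hpos : 0 < g' r₀ + k * g r₀) :
    ∃ b > 0, ∃ K, ∀ r, r₀ ≤ r → b * exp (k * r) ^ 2 + K ≤ exp (k * r) * g r := by
  set c := exp (-k * r₀) * (g' r₀ + k * g r₀)
  have hc : 0 < c := by positivity
  have hderiv_lower : ∀ r, r₀ ≤ r → c * exp (k * r) ≤ g' r + k * g r := by
    have hmono : MonotoneOn (fun r => exp (-k * r) * (g' r + k * g r)) (Ici r₀) := by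
      refine monotoneOn_Ici_of_hasDerivAt
        (h' := fun r => exp (-k * r) * (g'' r - k ^ 2 * g r)) (fun r hr => ?_)
        (fun r hr => mul_nonneg (exp_pos _).le (sub_nonneg.2 (hineq r (hr₀.trans hr))))
      exact (((hasDerivAt_id' r).const_mul (-k)).exp.fun_mul
        ((hg' r (hr₀.trans hr)).fun_add ((hg r (hr₀.trans hr)).const_mul k))).congr_deriv (by ring)
    intro r hr
    have h : c ≤ exp (-k * r) * (g' r + k * g r) := hmono self_mem_Ici hr hr
    rwa [neg_mul, exp_neg, ← div_eq_inv_mul, le_div_iff₀ (exp_pos _)] at h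
  have hmono : MonotoneOn (fun r => exp (k * r) * g r - c / (2 * k) * exp (k * r) ^ 2)
      (Ici r₀) := by
    refine monotoneOn_Ici_of_hasDerivAt
      (h' := fun r => exp (k * r) * (g' r + k * g r - c * exp (k * r))) (fun r hr => ?_)
      (fun r hr => mul_nonneg (exp_pos _).le (sub_nonneg.2 (hderiv_lower r hr)))
    have he := ((hasDerivAt_id' r).const_mul k).exp
    exact ((he.fun_mul (hg r (hr₀.trans hr))).fun_sub
      ((he.pow 2).const_mul (c / (2 * k)))).congr_deriv (by field_simp; ring)
  refine ⟨c / (2 * k), by positivity, exp (k * r₀) * g r₀ - c / (2 * k) * exp (k * r₀) ^ 2,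
    fun r hr => ?_⟩
  have h := hmono self_mem_Ici hr hr
  linarith

theorem deriv_add_mul_nonpos_of_sq_mul_le (hk : 0 < k)
    (hg : ∀ r, R ≤ r → HasDerivAt g (g' r) r) (hg' : ∀ r, R ≤ r → HasDerivAt g' (g'' r) r)
    (hineq : ∀ r, R ≤ r → k ^ 2 * g r ≤ g'' r) (hgrowth : g =o[atTop] fun r => exp (k * r))
    {r₀ : ℝ} (hr₀ : R ≤ r₀) : g' r₀ + k * g r₀ ≤ 0 := by
  by_contra! hpos
  obtain ⟨b, hb, K, hlower⟩ :=
    exists_pos_mul_exp_sq_add_le_of_deriv_add_mul_pos hk hg hg' hineq hr₀ hpos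
  have hsmall := hgrowth.def (c := b / 2) (by positivity)
  have hbig : Tendsto (fun r => b / 2 * exp (k * r) ^ 2) atTop atTop :=
    ((tendsto_pow_atTop two_ne_zero).comp
      (tendsto_exp_atTop.comp (tendsto_id.const_mul_atTop hk))).const_mul_atTop (by positivity)
  obtain ⟨r, hr_small, hr_big, hr⟩ :=
    (hsmall.and ((hbig.eventually_gt_atTop (-K)).and (eventually_ge_atTop r₀))).exists
  rw [norm_eq_abs, norm_of_nonneg (exp_pos _).le] at hr_small
  have hupper : exp (k * r) * g r ≤ b / 2 * exp (k * r) ^ 2 :=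
    calc exp (k * r) * g r ≤ exp (k * r) * (b / 2 * exp (k * r)) :=
          mul_le_mul_of_nonneg_left ((le_abs_self _).trans hr_small) (exp_pos _).le
      _ = b / 2 * exp (k * r) ^ 2 := by ring
  linarith [hlower r hr]

theorem antitoneOn_exp_mul_of_sq_mul_le (hk : 0 < k)
    (hg : ∀ r, R ≤ r → HasDerivAt g (g' r) r) (hg' : ∀ r, R ≤ r → HasDerivAt g' (g'' r) r)
    (hineq : ∀ r, R ≤ r → k ^ 2 * g r ≤ g'' r) (hgrowth : g =o[atTop] fun r => exp (k * r)) :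
    AntitoneOn (fun r => exp (k * r) * g r) (Ici R) := by
  have hasDeriv (r : ℝ) (hr : R ≤ r) := ((hasDerivAt_id' r).const_mul k).exp.fun_mul (hg r hr)
  refine antitoneOn_of_hasDerivWithinAt_nonpos (convex_Ici R)
    (f' := fun r => exp (k * r) * (g' r + k * g r))
    (fun r hr => (hasDeriv r hr).continuousAt.continuousWithinAt)
    (fun r hr => ?_) (fun r hr => ?_) <;> rw [interior_Ici] at hr
  · exact (hasDeriv r hr.out.le).hasDerivWithinAt.congr_deriv (by ring)
  · exact mul_nonpos_of_nonneg_of_nonpos (exp_pos _).le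
      (deriv_add_mul_nonpos_of_sq_mul_le hk hg hg' hineq hgrowth hr.out.le)

theorem exists_eventually_le_mul_exp_neg_of_sq_mul_le (hk : 0 < k)
    (hg : ∀ᶠ r in atTop, HasDerivAt g (g' r) r) (hg' : ∀ᶠ r in atTop, HasDerivAt g' (g'' r) r)
    (hineq : ∀ᶠ r in atTop, k ^ 2 * g r ≤ g'' r) (hgrowth : g =o[atTop] fun r => exp (k * r)) :
    ∃ C, ∀ᶠ r in atTop, g r ≤ C * exp (-(k * r)) := by
  obtain ⟨R, hR⟩ := eventually_atTop.1 (hg.and (hg'.and hineq))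
  have hanti := antitoneOn_exp_mul_of_sq_mul_le hk (fun r hr => (hR r hr).1)
    (fun r hr => (hR r hr).2.1) (fun r hr => (hR r hr).2.2) hgrowth
  refine ⟨exp (k * R) * g R, eventually_atTop.2 ⟨R, fun r hr => ?_⟩⟩
  have h : exp (k * r) * g r ≤ exp (k * R) * g R := hanti self_mem_Ici hr hr
  rwa [exp_neg, ← div_eq_mul_inv, le_div_iff₀ (exp_pos _), mul_comm]

end Comparison

theorem eventually_sq_mul_mul_one_sub_le {β γ : ℝ} {u f : ℝ → ℝ} (hβ : 0 ≤ β)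
    (hf01 : ∀ r : ℝ, 0 < r → 0 < f r ∧ f r < 1) (hfinf : Tendsto f atTop (𝓝 1))
    {D m k : ℝ} (hu : ∀ᶠ r in atTop, u r ^ 2 ≤ D * exp (-(m * r))) (hkγ : k ^ 2 < 2 * γ) :
    ∀ᶠ r in atTop, k ^ 2 * (r * (1 - f r)) ≤
      γ * f r * (1 + f r) * (r * (1 - f r)) - β / r * f r * u r ^ 2 + β * D * exp (-(m * r)) := by
  have hcoef : Tendsto (fun r => γ * f r * (1 + f r)) atTop (𝓝 (2 * γ)) := by
    convert (hfinf.const_mul γ).mul (hfinf.const_add 1) using 2; ring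
  filter_upwards [hcoef.eventually_const_le hkγ, hu, eventually_ge_atTop 1]
    with r hcoef_r hu_r hr
  have hf := hf01 r (by linarith)
  have hforce : β / r * f r * u r ^ 2 ≤ β * D * exp (-(m * r)) :=
    calc β / r * f r * u r ^ 2 ≤ β * u r ^ 2 := by
          refine mul_le_mul_of_nonneg_right ?_ (sq_nonneg _)
          calc β / r * f r ≤ β / r := mul_le_of_le_one_right (by positivity) hf.2.le
            _ ≤ β := div_le_self hβ hr
      _ ≤ β * D * exp (-(m * r)) := by rw [mul_assoc]; exact mul_le_mul_of_nonneg_left hu_r hβ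
  have hlinear : k ^ 2 * (r * (1 - f r)) ≤ γ * f r * (1 + f r) * (r * (1 - f r)) :=
    mul_le_mul_of_nonneg_right hcoef_r (by nlinarith)
  linarith

namespace SolvesODE

variable {α β γ : ℝ} {u u' f f' : ℝ → ℝ}

theorem exists_eventually_u_le_mul_exp_neg (hsol : SolvesODE α β γ u u' f f')
    (hu01 : ∀ r : ℝ, 0 < r → 0 < u r ∧ u r < 1) (hfinf : Tendsto f atTop (𝓝 1))
    {c : ℝ} (hc : 0 < c) (hc2 : c ^ 2 < α * β / 2) :
    ∃ C, ∀ᶠ r in atTop, u r ≤ C * exp (-(c * r)) := by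
  have hcoef : Tendsto (fun r => α * β / 2 * f r ^ 2 - 1 / r ^ 2) atTop (𝓝 (α * β / 2)) := by
    simpa using ((hfinf.pow 2).const_mul (α * β / 2)).sub
      (tendsto_inv_atTop_zero.comp (tendsto_pow_atTop (α := ℝ) two_ne_zero))
  refine exists_eventually_le_mul_exp_neg_of_sq_mul_le hc
    (g'' := fun r => α * β / 2 * f r ^ 2 * u r + u r * (u r ^ 2 - 1) / r ^ 2)
    ((eventually_gt_atTop 0).mono fun r hr => (hsol r hr).1)
    ((eventually_gt_atTop 0).mono fun r hr => (hsol r hr).2.2.1) ?_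
    (isLittleO_exp_mul_of_abs_le_mul hc (B := 1) ?_)
  · filter_upwards [hcoef.eventually_const_le hc2, eventually_gt_atTop 0] with r hcoef_r hr
    have hu0 := (hu01 r hr).1
    have hcubic : 0 ≤ u r ^ 3 / r ^ 2 := by positivity
    calc c ^ 2 * u r ≤ (α * β / 2 * f r ^ 2 - 1 / r ^ 2) * u r :=
          mul_le_mul_of_nonneg_right hcoef_r hu0.le
      _ = α * β / 2 * f r ^ 2 * u r + u r * (u r ^ 2 - 1) / r ^ 2 - u r ^ 3 / r ^ 2 := by ring
      _ ≤ _ := by linarith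
  · filter_upwards [eventually_ge_atTop 1] with r hr
    have hu := hu01 r (by linarith)
    rw [abs_of_pos hu.1]
    linarith

theorem hasDerivAt_mul_one_sub (hsol : SolvesODE α β γ u u' f f') {r : ℝ} (hr : 0 < r) :
    HasDerivAt (fun s => s * (1 - f s)) (1 - f r - r * f' r) r :=
  ((hasDerivAt_id' r).fun_mul ((hasDerivAt_const r 1).fun_sub (hsol r hr).2.1)).congr_deriv
    (by ring)

theorem hasDerivAt_deriv_mul_one_sub (hsol : SolvesODE α β γ u u' f f') {r : ℝ} (hr : 0 < r) :
    HasDerivAt (fun s => 1 - f s - s * f' s)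
      (γ * f r * (1 + f r) * (r * (1 - f r)) - β / r * f r * u r ^ 2) r := by
  refine (((hasDerivAt_const r 1).fun_sub (hsol r hr).2.1).fun_sub
    ((hasDerivAt_id' r).fun_mul (hsol r hr).2.2.2)).congr_deriv ?_
  field_simp
  ring

theorem exists_eventually_one_sub_f_le_mul_exp_neg (hβ : 0 ≤ β)
    (hsol : SolvesODE α β γ u u' f f') (hf01 : ∀ r : ℝ, 0 < r → 0 < f r ∧ f r < 1)
    (hfinf : Tendsto f atTop (𝓝 1)) {D m k : ℝ} (hu : ∀ᶠ r in atTop, u r ^ 2 ≤ D * exp (-(m * r)))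
    (hk : 0 < k) (hkm : k < m) (hkγ : k ^ 2 < 2 * γ) :
    ∃ C, ∀ᶠ r in atTop, 1 - f r ≤ C * exp (-(k * r)) := by
  have hD : 0 ≤ D := by
    obtain ⟨r, hr⟩ := hu.exists
    exact nonneg_of_mul_nonneg_left ((sq_nonneg _).trans hr) (exp_pos _)
  -- `E e^{-mr}` absorbs the forcing term `β f u² / r ≤ β D e^{-mr}` in the equation for
  -- `r (1 - f)`.
  set E := β * D / (m ^ 2 - k ^ 2)
  have hmk : 0 < m ^ 2 - k ^ 2 := by nlinarith
  have hE : 0 ≤ E := div_nonneg (by positivity) hmk.le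
  have hEm : m ^ 2 * E = k ^ 2 * E + β * D := by
    simp only [E]; field_simp; ring
  set q := fun r => r * (1 - f r) + E * exp (-(m * r))
  set q' := fun r => 1 - f r - r * f' r - m * E * exp (-(m * r))
  set q'' := fun r => γ * f r * (1 + f r) * (r * (1 - f r)) - β / r * f r * u r ^ 2
      + m ^ 2 * E * exp (-(m * r))
  have hexp (c r : ℝ) : HasDerivAt (fun s => c * exp (-(m * s))) (-(m * c) * exp (-(m * r))) r :=
    ((((hasDerivAt_id' r).const_mul m).fun_neg.exp).const_mul c).congr_deriv (by ring)
  have hq : ∀ᶠ r in atTop, HasDerivAt q (q' r) r := by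
    filter_upwards [eventually_gt_atTop 0] with r hr
    exact ((hsol.hasDerivAt_mul_one_sub hr).fun_add (hexp E r)).congr_deriv (by ring)
  have hq' : ∀ᶠ r in atTop, HasDerivAt q' (q'' r) r := by
    filter_upwards [eventually_gt_atTop 0] with r hr
    exact ((hsol.hasDerivAt_deriv_mul_one_sub hr).fun_sub (hexp (m * E) r)).congr_deriv (by ring)
  have hineq : ∀ᶠ r in atTop, k ^ 2 * q r ≤ q'' r := by
    filter_upwards [eventually_sq_mul_mul_one_sub_le hβ hf01 hfinf hu hkγ] with r hr
    have hEmX : m ^ 2 * E * exp (-(m * r))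
        = k ^ 2 * E * exp (-(m * r)) + β * D * exp (-(m * r)) := by rw [hEm]; ring
    simp only [q, q'']
    linarith
  have hgrowth : q =o[atTop] fun r => exp (k * r) := by
    refine isLittleO_exp_mul_of_abs_le_mul hk (B := 1 + E) ?_
    filter_upwards [eventually_ge_atTop 1] with r hr
    have hf := hf01 r (by linarith)
    have hX : exp (-(m * r)) ≤ 1 := exp_le_one_iff.2 (by nlinarith)
    rw [abs_of_nonneg (add_nonneg (by nlinarith) (by positivity))]
    nlinarith
  obtain ⟨C, hC⟩ := exists_eventually_le_mul_exp_neg_of_sq_mul_le hk hq hq' hineq hgrowth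
  refine ⟨C, ?_⟩
  filter_upwards [hC, eventually_ge_atTop 1] with r hCr hr
  have hf := hf01 r (by linarith)
  have : 0 ≤ E * exp (-(m * r)) := by positivity
  nlinarith

end SolvesODE

theorem f_exponential_decay_general (α β γ : ℝ) (hα : 0 < α) (hβ : 0 < β) (hγ : 0 < γ)
    (u u' f f' : ℝ → ℝ) (hsol : SolvesODE α β γ u u' f f')
    (hu01 : ∀ r : ℝ, 0 < r → 0 < u r ∧ u r < 1)
    (hf01 : ∀ r : ℝ, 0 < r → 0 < f r ∧ f r < 1)
    (hfinf : Tendsto f atTop (𝓝 1)) :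
    ∀ ε : ℝ, 0 < ε → ε < 1 →
      ∃ C > (0 : ℝ), ∃ R > (0 : ℝ), ∀ r : ℝ, R ≤ r →
        1 - f r ≤ C * Real.exp
          (-(Real.sqrt 2 * min (Real.sqrt γ) (Real.sqrt (α * β)) * (1 - ε) * r)) := by
  intro ε hε hε1
  set a := Real.sqrt 2 * min (Real.sqrt γ) (Real.sqrt (α * β)) * (1 - ε)
  have hmin : 0 < min (Real.sqrt γ) (Real.sqrt (α * β)) := by positivity
  have ha : 0 < a := mul_pos (by positivity) (by linarith)
  have ha_lt (x : ℝ) (hx : min (Real.sqrt γ) (Real.sqrt (α * β)) ≤ Real.sqrt x) :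
      a < Real.sqrt (2 * x) := by
    have hx0 : 0 < Real.sqrt x := hmin.trans_le hx
    rw [Real.sqrt_mul zero_le_two]
    calc a ≤ Real.sqrt 2 * Real.sqrt x * (1 - ε) :=
          mul_le_mul_of_nonneg_right (mul_le_mul_of_nonneg_left hx (by positivity)) (by linarith)
      _ < Real.sqrt 2 * Real.sqrt x := mul_lt_of_lt_one_right (by positivity) (by linarith)
  have haγ : a ^ 2 < 2 * γ := (Real.lt_sqrt ha.le).1 (ha_lt γ (min_le_left _ _))
  obtain ⟨m, ham, hm⟩ := exists_between (ha_lt (α * β) (min_le_right _ _))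
  have hm2 : (m / 2) ^ 2 < α * β / 2 := by
    have := (Real.lt_sqrt (ha.trans ham).le).1 hm
    linarith
  obtain ⟨Cu, hu⟩ :=
    hsol.exists_eventually_u_le_mul_exp_neg hu01 hfinf (by linarith : 0 < m / 2) hm2
  have hu2 := eventually_sq_le_of_le_mul_exp
    ((eventually_gt_atTop 0).mono fun r hr => (hu01 r hr).1.le) hu
  obtain ⟨C, hC⟩ := hsol.exists_eventually_one_sub_f_le_mul_exp_neg hβ.le hf01 hfinf hu2
    ha (by linarith) haγ
  exact exists_pos_forall_le_of_eventually_le hC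

/-- exponential convergence of `f` to `1` at infinity (case `γ > 0`):
`1 − f(r) ≤ C exp(−√2·min{√γ, √(αβ)}·(1−ε)·r)` for `r` large. -/
theorem f_exponential_decay (α β γ : ℝ) (hα : 0 < α) (hβ : 0 < β) (hγ : 0 < γ)
    (u u' f f' : ℝ → ℝ) (hsol : SolvesODE α β γ u u' f f')
    (hu01 : ∀ r : ℝ, 0 < r → 0 < u r ∧ u r < 1)
    (hf01 : ∀ r : ℝ, 0 < r → 0 < f r ∧ f r < 1)
    (huinf : Tendsto u atTop (𝓝 0))
    (hfinf : Tendsto f atTop (𝓝 1)) :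
    ∀ ε : ℝ, 0 < ε → ε < 1 →
      ∃ C > (0 : ℝ), ∃ R > (0 : ℝ), ∀ r : ℝ, R ≤ r →
        1 - f r ≤ C * Real.exp
          (-(Real.sqrt 2 * min (Real.sqrt γ) (Real.sqrt (α * β)) * (1 - ε) * r)) :=
  f_exponential_decay_general α β γ hα hβ hγ u u' f f' hsol hu01 hf01 hfinf
end
end

section
/- Let α, β > 0 and γ ≥ 0, and let (u,f) be a twice continuously differentiable solution on (0,∞) of u'' = (αβ/2) f² u + u(u²−1)/r² and f'' = −(2/r) f' + (β/r²) f u² + γ f(f²−1), with 0 < u(r) < 1 and 0 < f(r) < 1 for all r > 0, lim_{r→0} u(r) = 1 and lim_{r→0} f(r) = 0. Set σ = √(1/4 + β) − 1/2. Then for every ε ∈ (0,1) there exist constants C > 0 and δ > 0 such that f(r) ≤ C·r^{σ(1−ε)} for all r ∈ (0,δ). -/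
/-!
Comparison with `g r = C r ^ p`, `p = σ (1 - ε)`, which solves the Euler equation
`r² g'' + 2 r g' = (p² + p) g`. Since `p² + p < σ² + σ = β` and `u → 1`, near the origin the
`f`-equation gives `r² f'' + 2 r f' ≥ (p² + p) f` wherever `f > 0`. If `f - g` were positive
somewhere in `(0, δ]`, then, tending to `0` at the origin and being `≤ 0` at `δ`, it would have a
positive interior maximum; there `f' = g'`, hence `r² (f - g)'' ≥ (p² + p) (f - g) > 0`,
which a maximum does not allow.
-/

open MeasureTheory Filter Set Topology

noncomputable section

/-- By the second-derivative test a positive `D` would make `x` a local minimum as well,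
so `w` would be locally constant and `W` locally zero. -/
theorem IsLocalMax.second_deriv_nonpos {w W : ℝ → ℝ} {x D : ℝ} (hmax : IsLocalMax w x)
    (hw : ∀ᶠ y in 𝓝 x, HasDerivAt w (W y) y) (hW : HasDerivAt W D x) : D ≤ 0 := by
  by_contra! hD
  have hderiv : deriv w =ᶠ[𝓝 x] W := hw.mono fun y hy => hy.deriv
  have hW0 : W x = 0 := hmax.hasDerivAt_eq_zero hw.self_of_nhds
  have hmin : IsLocalMin w x :=
    isLocalMin_of_deriv_deriv_pos (by rwa [hderiv.deriv_eq, hW.deriv])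
      (by rw [hderiv.eq_of_nhds, hW0]) hw.self_of_nhds.continuousAt
  have hconst : W =ᶠ[𝓝 x] fun _ => 0 := by
    have : w =ᶠ[𝓝 x] fun _ => w x := (hmax.and hmin).mono fun y hy => le_antisymm hy.1 hy.2
    filter_upwards [hderiv, this.deriv] with y hy hy'
    rw [← hy, hy', deriv_const]
  exact hD.ne' ((hW.congr_of_eventuallyEq hconst.symm).unique (hasDerivAt_const x 0))

theorem exists_isLocalMax_ge_of_tendsto_nhdsGT {w : ℝ → ℝ} {a b c l : ℝ}
    (hw : ContinuousOn w (Ioc a b)) (hwa : Tendsto w (𝓝[>] a) (𝓝 l)) (hc : c ∈ Ioc a b)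
    (hl : l < w c) (hb : w b < w c) : ∃ x ∈ Ioo a b, IsLocalMax w x ∧ w c ≤ w x := by
  obtain ⟨a₀, hwa₀, ha₀⟩ :=
    ((hwa.eventually (eventually_lt_nhds hl)).and (Ioo_mem_nhdsGT hc.1)).exists
  obtain ⟨x, hx, hmax⟩ := isCompact_Icc.exists_isMaxOn (nonempty_Icc.mpr (ha₀.2.le.trans hc.2))
    (hw.mono (Icc_subset_Ioc_left ha₀.1))
  have hcx : w c ≤ w x := hmax ⟨ha₀.2.le, hc.2⟩
  have hx₁ : a₀ < x := hx.1.lt_of_ne (by rintro rfl; linarith)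
  have hx₂ : x < b := hx.2.lt_of_ne (by rintro rfl; linarith)
  exact ⟨x, ⟨ha₀.1.trans hx₁, hx₂⟩, hmax.isLocalMax (Icc_mem_nhds hx₁ hx₂), hcx⟩

theorem le_const_mul_rpow_of_euler_subsolution {f f' f'' : ℝ → ℝ} {p C δ : ℝ} (hp : 0 < p)
    (hC : 0 ≤ C) (hf : ∀ r ∈ Ioc 0 δ, HasDerivAt f (f' r) r)
    (hf' : ∀ r ∈ Ioc 0 δ, HasDerivAt f' (f'' r) r)
    (hsub : ∀ r ∈ Ioc 0 δ, 0 < f r → (p ^ 2 + p) * f r ≤ r ^ 2 * f'' r + 2 * r * f' r)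
    (hf0 : Tendsto f (𝓝[>] 0) (𝓝 0)) (hfδ : f δ ≤ C * δ ^ p) :
    ∀ r ∈ Ioc 0 δ, f r ≤ C * r ^ p := by
  by_contra! ⟨r₀, hr₀, hfr₀⟩
  set w : ℝ → ℝ := fun r => f r - C * r ^ p with hw_def
  have hw : ∀ r ∈ Ioc 0 δ, HasDerivAt w (f' r - C * (p * r ^ (p - 1))) r := fun r hr =>
    (hf r hr).sub ((Real.hasDerivAt_rpow_const (Or.inl hr.1.ne')).const_mul C)
  have hw0 : Tendsto w (𝓝[>] 0) (𝓝 0) := by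
    have hrpow := (Real.continuousAt_rpow_const 0 p (Or.inr hp.le)).continuousWithinAt
      (s := Ioi 0) |>.tendsto.const_mul C
    simpa [Real.zero_rpow hp.ne'] using hf0.sub hrpow
  obtain ⟨x, hx, hmax, hwx⟩ := exists_isLocalMax_ge_of_tendsto_nhdsGT
    (fun r hr => (hw r hr).continuousAt.continuousWithinAt) hw0 hr₀
    (by simp only [hw_def]; linarith) (by simp only [hw_def]; linarith)
  have hxδ : x ∈ Ioc 0 δ := Ioo_subset_Ioc_self hx
  have hfx : C * x ^ p < f x := by simp only [hw_def] at hwx; linarith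
  have hf'x : f' x = C * (p * x ^ (p - 1)) :=
    sub_eq_zero.mp (hmax.hasDerivAt_eq_zero (hw x hxδ))
  have hD := hmax.second_deriv_nonpos
    (eventually_of_mem (Ioo_mem_nhds hx.1 hx.2) fun y hy => hw y (Ioo_subset_Ioc_self hy))
    ((hf' x hxδ).sub (((Real.hasDerivAt_rpow_const (Or.inl hx.1.ne')).const_mul p).const_mul C))
  have hx0 : x ≠ 0 := hx.1.ne'
  have hx1 : x * x ^ (p - 1) = x ^ p := by
    rw [Real.rpow_sub_one hx0]; field_simp
  have hx2 : x ^ 2 * x ^ (p - 1 - 1) = x ^ p := by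
    rw [Real.rpow_sub_one hx0, Real.rpow_sub_one hx0]; field_simp
  have hsubx := hsub x hxδ ((mul_nonneg hC (Real.rpow_nonneg hx.1.le p)).trans_lt hfx)
  have hgap : 0 < (p ^ 2 + p) * (f x - C * x ^ p) := mul_pos (by positivity) (sub_pos.2 hfx)
  have hf''x : x ^ 2 * f'' x ≤ C * p * (p - 1) * x ^ p := by
    rw [← hx2]; linear_combination x ^ 2 * hD
  have hf'x' : 2 * x * f' x = 2 * C * p * x ^ p := by rw [hf'x, ← hx1]; ring
  linarith

theorem sqrt_one_quarter_add_sub_half_pos {β : ℝ} (hβ : 0 < β) :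
    0 < Real.sqrt (1 / 4 + β) - 1 / 2 := by
  have : Real.sqrt (1 / 4) < Real.sqrt (1 / 4 + β) := Real.sqrt_lt_sqrt (by norm_num) (by linarith)
  rw [show Real.sqrt (1 / 4) = 1 / 2 by rw [Real.sqrt_eq_iff_mul_self_eq] <;> norm_num] at this
  linarith

theorem sqrt_one_quarter_add_sub_half_sq_add_self {β : ℝ} (hβ : -(1 / 4) ≤ β) :
    (Real.sqrt (1 / 4 + β) - 1 / 2) ^ 2 + (Real.sqrt (1 / 4 + β) - 1 / 2) = β := by
  linear_combination Real.sq_sqrt (by linarith : (0 : ℝ) ≤ 1 / 4 + β)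

theorem le_euler_operator_of_f_equation {β γ k r f₀ f₁ u₀ : ℝ} (hγ : 0 ≤ γ) (hr : 0 < r)
    (hf₀ : 0 < f₀) (hk : k ≤ β * u₀ ^ 2 - γ * r ^ 2) :
    k * f₀ ≤ r ^ 2 * (-(2 / r) * f₁ + β / r ^ 2 * f₀ * u₀ ^ 2 + γ * f₀ * (f₀ ^ 2 - 1))
      + 2 * r * f₁ := by
  have hexpand : r ^ 2 * (-(2 / r) * f₁ + β / r ^ 2 * f₀ * u₀ ^ 2 + γ * f₀ * (f₀ ^ 2 - 1))
      + 2 * r * f₁ = (β * u₀ ^ 2 - γ * r ^ 2) * f₀ + γ * r ^ 2 * f₀ ^ 3 := by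
    field_simp; ring
  rw [hexpand]
  linarith [mul_le_mul_of_nonneg_right hk hf₀.le,
    (by positivity : 0 ≤ γ * r ^ 2 * f₀ ^ 3)]

theorem f_power_behavior_at_origin_general (α β γ : ℝ) (hβ : 0 < β) (hγ : 0 ≤ γ)
    (u u' f f' : ℝ → ℝ) (hsol : SolvesODE α β γ u u' f f')
    (hf01 : ∀ r : ℝ, 0 < r → 0 < f r ∧ f r < 1)
    (hu0 : Tendsto u (𝓝[>] (0 : ℝ)) (𝓝 1))
    (hf0 : Tendsto f (𝓝[>] (0 : ℝ)) (𝓝 0))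
    (σ : ℝ) (hσ : σ = Real.sqrt (1 / 4 + β) - 1 / 2) :
    ∀ ε : ℝ, 0 < ε → ε < 1 →
      ∃ C > (0 : ℝ), ∃ δ > (0 : ℝ), ∀ r : ℝ, 0 < r → r < δ →
        f r ≤ C * r ^ (σ * (1 - ε)) := by
  intro ε hε hε1
  have hσ0 : 0 < σ := hσ ▸ sqrt_one_quarter_add_sub_half_pos hβ
  have hσβ : σ ^ 2 + σ = β := hσ ▸ sqrt_one_quarter_add_sub_half_sq_add_self (by linarith)
  set p := σ * (1 - ε)
  have hp : 0 < p := mul_pos hσ0 (by linarith)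
  have hpβ : p ^ 2 + p < β := by nlinarith [mul_pos hσ0 hε]
  have hlim : Tendsto (fun r => β * u r ^ 2 - γ * r ^ 2) (𝓝[>] 0) (𝓝 β) := by
    have hr2 : Tendsto (fun r : ℝ => r ^ 2) (𝓝[>] 0) (𝓝 0) := by
      simpa using ((continuous_pow 2).tendsto (0 : ℝ)).mono_left nhdsWithin_le_nhds
    simpa using ((hu0.pow 2).const_mul β).sub (hr2.const_mul γ)
  obtain ⟨δ₁, hδ₁, hgood⟩ :=
    mem_nhdsGT_iff_exists_Ioo_subset.mp (hlim.eventually (eventually_gt_nhds hpβ))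
  have hδ : 0 < δ₁ / 2 := half_pos hδ₁
  have hIoc : Ioc 0 (δ₁ / 2) ⊆ Ioo 0 δ₁ := Ioc_subset_Ioo_right (half_lt_self hδ₁)
  have hfδ : f (δ₁ / 2) ≤ 1 / (δ₁ / 2) ^ p * (δ₁ / 2) ^ p := by
    rw [one_div_mul_cancel (Real.rpow_pos_of_pos hδ p).ne']; exact (hf01 _ hδ).2.le
  refine ⟨1 / (δ₁ / 2) ^ p, by positivity, δ₁ / 2, hδ, fun r hr hrδ => ?_⟩
  exact le_const_mul_rpow_of_euler_subsolution hp (by positivity)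
    (fun s hs => (hsol s hs.1).2.1) (fun s hs => (hsol s hs.1).2.2.2)
    (fun s hs hfs => le_euler_operator_of_f_equation hγ hs.1 hfs (hgood (hIoc hs)).le)
    hf0 hfδ r ⟨hr, hrδ.le⟩

/-- power-law behaviour of `f` near the origin: with
`σ = √(1/4 + β) − 1/2`, one has `f(r) ≤ C·r^{σ(1−ε)}` for `r` small. -/
theorem f_power_behavior_at_origin (α β γ : ℝ) (hα : 0 < α) (hβ : 0 < β) (hγ : 0 ≤ γ)
    (u u' f f' : ℝ → ℝ) (hsol : SolvesODE α β γ u u' f f')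
    (hu01 : ∀ r : ℝ, 0 < r → 0 < u r ∧ u r < 1)
    (hf01 : ∀ r : ℝ, 0 < r → 0 < f r ∧ f r < 1)
    (hu0 : Tendsto u (𝓝[>] (0 : ℝ)) (𝓝 1))
    (hf0 : Tendsto f (𝓝[>] (0 : ℝ)) (𝓝 0))
    (σ : ℝ) (hσ : σ = Real.sqrt (1 / 4 + β) - 1 / 2) :
    ∀ ε : ℝ, 0 < ε → ε < 1 →
      ∃ C > (0 : ℝ), ∃ δ > (0 : ℝ), ∀ r : ℝ, 0 < r → r < δ →
        f r ≤ C * r ^ (σ * (1 - ε)) :=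
  f_power_behavior_at_origin_general α β γ hβ hγ u u' f f' hsol hf01 hu0 hf0 σ hσ
end
end

section
/- Let β > 0, γ ≥ 0, and let u, f be continuous real-valued functions on (0,∞) with 0 ≤ u ≤ 1, 0 ≤ f ≤ 1, lim_{r→0} u(r) = 1, f twice continuously differentiable on (0,∞) satisfying (r² f'(r))' = β f(r) u(r)² + γ r² f(r)(f(r)² − 1) for all r > 0, and with finite weighted Dirichlet integral ∫₀^∞ r² f'(r)² dr < ∞. Then lim_{r→0} r² f'(r) = 0 and, for all r > 0, r² f'(r) = ∫₀^r [β f(ρ) u(ρ)² + γ ρ² f(ρ)(f(ρ)² − 1)] dρ. -/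
open MeasureTheory Filter Set Topology

/-!
Since `g(r) = r² f'(r)` has derivative equal to the source term, which is bounded near `0` by
`0 ≤ u, f ≤ 1`, the fundamental theorem of calculus gives `g(r) = c + ∫₀^r (source)` with
`c = lim_{r→0⁺} g(r)`. If `c ≠ 0`, then `r² f'² = g² / r² ≳ c² / r²` near `0`, contradicting the
finiteness of the weighted Dirichlet integral. Hence `c = 0`.
-/

lemma integrableOn_Ioc_of_continuousOn_of_norm_le {E : Type*} [NormedAddCommGroup E]
    {h : ℝ → E} {a b C : ℝ} (hc : ContinuousOn h (Ioi a)) (hC : ∀ x ∈ Ioc a b, ‖h x‖ ≤ C) :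
    IntegrableOn h (Ioc a b) :=
  (integrable_const C).mono' ((hc.mono Ioc_subset_Ioi_self).aestronglyMeasurable measurableSet_Ioc)
    (ae_restrict_of_forall_mem measurableSet_Ioc hC)

section Primitive

variable {E : Type*} [NormedAddCommGroup E] [NormedSpace ℝ E] [CompleteSpace E]
  {g h : ℝ → E} {a : ℝ}

lemma tendsto_nhdsGT_sub_setIntegral_Ioc {b : ℝ} (hab : a < b)
    (hg : ∀ x, a < x → HasDerivAt g (h x) x) (hh : IntegrableOn h (Ioc a b)) :
    Tendsto g (𝓝[>] a) (𝓝 (g b - ∫ x in Ioc a b, h x)) := by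
  have h_prim : ContinuousWithinAt (fun s => ∫ x in s..b, h x) (Icc a b) a := by
    have h_Icc : IntegrableOn h (uIcc a b) := by
      rwa [uIcc_of_le hab.le, integrableOn_Icc_iff_integrableOn_Ioc]
    simpa only [uIcc_of_le hab.le] using
      intervalIntegral.continuousOn_primitive_interval_left h_Icc a left_mem_uIcc
  have h_ftc : ∀ s ∈ Ioc a b, g s = g b - ∫ x in s..b, h x := fun s hs => by
    have h_int : IntervalIntegrable h volume s b :=
      (intervalIntegrable_iff_integrableOn_Ioc_of_le hs.2).2
        (hh.mono_set (Ioc_subset_Ioc_left hs.1.le))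
    have h_deriv : ∀ x ∈ uIcc s b, HasDerivAt g (h x) x := fun x hx =>
      hg x (hs.1.trans_le (uIcc_of_le hs.2 ▸ hx).1)
    rw [intervalIntegral.integral_eq_sub_of_hasDerivAt h_deriv h_int, sub_sub_cancel]
  rw [← intervalIntegral.integral_of_le hab.le, ← nhdsWithin_Ioc_eq_nhdsGT hab]
  refine (tendsto_const_nhds.sub (h_prim.mono Ioc_subset_Icc_self).tendsto).congr' ?_
  filter_upwards [self_mem_nhdsWithin] with s hs using (h_ftc s hs).symm

theorem exists_tendsto_nhdsGT_and_eq_add_setIntegral_Ioc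
    (hg : ∀ x, a < x → HasDerivAt g (h x) x) (hh : ∀ b, a < b → IntegrableOn h (Ioc a b)) :
    ∃ c, Tendsto g (𝓝[>] a) (𝓝 c) ∧ ∀ b, a < b → g b = c + ∫ x in Ioc a b, h x := by
  have h_lim := fun b hab => tendsto_nhdsGT_sub_setIntegral_Ioc hab hg (hh b hab)
  refine ⟨_, h_lim (a + 1) (lt_add_one a), fun b hab => ?_⟩
  rw [tendsto_nhds_unique (h_lim (a + 1) (lt_add_one a)) (h_lim b hab), sub_add_cancel]

end Primitive

theorem eq_zero_of_tendsto_sq_mul_of_integrableOn_sq_mul_sq {f' : ℝ → ℝ} {c : ℝ}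
    (hlim : Tendsto (fun r => r ^ 2 * f' r) (𝓝[>] 0) (𝓝 c))
    (hfin : IntegrableOn (fun r => r ^ 2 * f' r ^ 2) (Ioi 0)) : c = 0 := by
  by_contra hc
  have hc2 : 0 < c ^ 2 := by positivity
  have h_ev : ∀ᶠ r in 𝓝[>] (0 : ℝ), c ^ 2 / 2 < (r ^ 2 * f' r) ^ 2 :=
    (hlim.pow 2).eventually (lt_mem_nhds (half_lt_self hc2))
  obtain ⟨ε, hε, h_sub⟩ := mem_nhdsGT_iff_exists_Ioo_subset.1 h_ev
  have h_rpow : IntegrableOn (fun x : ℝ => x ^ (-2 : ℝ)) (Ioo 0 ε) := by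
    refine ((hfin.mono_set Ioo_subset_Ioi_self).const_mul (2 / c ^ 2)).mono'
      (measurable_id.pow_const _).aestronglyMeasurable ?_
    filter_upwards [ae_restrict_mem measurableSet_Ioo] with x hx
    have hx0 : 0 < x := hx.1
    have hcx : c ^ 2 / 2 < (x ^ 2 * f' x) ^ 2 := h_sub hx
    rw [Real.norm_of_nonneg (by positivity), Real.rpow_neg hx0.le, Real.rpow_two,
      inv_le_iff_one_le_mul₀ (by positivity),
      show 2 / c ^ 2 * (x ^ 2 * f' x ^ 2) * x ^ 2 = 2 * (x ^ 2 * f' x) ^ 2 / c ^ 2 by ring,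
      le_div_iff₀ hc2]
    linarith
  exact absurd ((intervalIntegral.integrableOn_Ioo_rpow_iff hε).1 h_rpow) (by norm_num)

lemma abs_source_le {β γ F U ρ : ℝ} (hβ : 0 ≤ β) (hγ : 0 ≤ γ) (hF : F ∈ Icc (0 : ℝ) 1)
    (hU : U ∈ Icc (0 : ℝ) 1) :
    |β * F * U ^ 2 + γ * ρ ^ 2 * F * (F ^ 2 - 1)| ≤ β + γ * ρ ^ 2 := by
  obtain ⟨hF0, hF1⟩ := hF
  obtain ⟨hU0, hU1⟩ := hU
  have hFU : F * U ^ 2 ≤ 1 := by nlinarith [mul_le_one₀ hU1 hU0 hU1]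
  have hFF : 0 ≤ F * (1 - F ^ 2) ∧ F * (1 - F ^ 2) ≤ 1 := ⟨by nlinarith, by nlinarith⟩
  have hγρ : 0 ≤ γ * ρ ^ 2 := by positivity
  rw [abs_le]
  constructor <;> nlinarith [mul_nonneg hβ (mul_nonneg hF0 (sq_nonneg U)),
    mul_le_mul_of_nonneg_left hFU hβ, mul_nonneg hγρ hFF.1, mul_le_mul_of_nonneg_left hFF.2 hγρ]

theorem rsq_fprime_representation_general (β γ : ℝ) (hβ : 0 < β) (hγ : 0 ≤ γ)
    (u f f' : ℝ → ℝ)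
    (hu_cont : ContinuousOn u (Ioi 0))
    (hf_cont : ContinuousOn f (Ioi 0))
    (hu01 : ∀ r : ℝ, 0 < r → 0 ≤ u r ∧ u r ≤ 1)
    (hf01 : ∀ r : ℝ, 0 < r → 0 ≤ f r ∧ f r ≤ 1)
    (heq : ∀ r : ℝ, 0 < r →
      HasDerivAt (fun s : ℝ => s ^ 2 * f' s)
        (β * f r * u r ^ 2 + γ * r ^ 2 * f r * (f r ^ 2 - 1)) r)
    (hfin : IntegrableOn (fun r : ℝ => r ^ 2 * f' r ^ 2) (Ioi 0)) :
    Tendsto (fun r : ℝ => r ^ 2 * f' r) (𝓝[>] (0 : ℝ)) (𝓝 0) ∧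
      ∀ r : ℝ, 0 < r →
        r ^ 2 * f' r =
          ∫ ρ in Ioc (0 : ℝ) r,
            (β * f ρ * u ρ ^ 2 + γ * ρ ^ 2 * f ρ * (f ρ ^ 2 - 1)) := by
  have h_int : ∀ r, 0 < r →
      IntegrableOn (fun ρ => β * f ρ * u ρ ^ 2 + γ * ρ ^ 2 * f ρ * (f ρ ^ 2 - 1)) (Ioc 0 r) :=
    fun r _ => integrableOn_Ioc_of_continuousOn_of_norm_le (C := β + γ * r ^ 2) (by fun_prop)
      fun ρ hρ => (abs_source_le hβ.le hγ (hf01 ρ hρ.1) (hu01 ρ hρ.1)).trans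
        (by gcongr; exacts [hρ.1.le, hρ.2])
  obtain ⟨c, h_lim, h_rep⟩ := exists_tendsto_nhdsGT_and_eq_add_setIntegral_Ioc heq h_int
  obtain rfl : c = 0 := eq_zero_of_tendsto_sq_mul_of_integrableOn_sq_mul_sq h_lim hfin
  exact ⟨h_lim, fun r hr => by rw [h_rep r hr, zero_add]⟩

/-- for a solution of `(r² f')' = β f u² + γ r² f(f²−1)` with `0 ≤ u,f ≤ 1`,
`u → 1` at `0⁺` and finite weighted Dirichlet integral, one has
`lim_{r→0⁺} r² f'(r) = 0` and the integral representation
`r² f'(r) = ∫₀^r [β f u² + γ ρ² f(f²−1)] dρ`. -/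
theorem rsq_fprime_representation (β γ : ℝ) (hβ : 0 < β) (hγ : 0 ≤ γ)
    (u f f' : ℝ → ℝ)
    (hu_cont : ContinuousOn u (Ioi 0))
    (hf_cont : ContinuousOn f (Ioi 0))
    (hu01 : ∀ r : ℝ, 0 < r → 0 ≤ u r ∧ u r ≤ 1)
    (hf01 : ∀ r : ℝ, 0 < r → 0 ≤ f r ∧ f r ≤ 1)
    (hu0 : Tendsto u (𝓝[>] (0 : ℝ)) (𝓝 1))
    (hf' : ∀ r : ℝ, 0 < r → HasDerivAt f (f' r) r)
    (heq : ∀ r : ℝ, 0 < r →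
      HasDerivAt (fun s : ℝ => s ^ 2 * f' s)
        (β * f r * u r ^ 2 + γ * r ^ 2 * f r * (f r ^ 2 - 1)) r)
    (hfin : IntegrableOn (fun r : ℝ => r ^ 2 * f' r ^ 2) (Ioi 0)) :
    Tendsto (fun r : ℝ => r ^ 2 * f' r) (𝓝[>] (0 : ℝ)) (𝓝 0) ∧
      ∀ r : ℝ, 0 < r →
        r ^ 2 * f' r =
          ∫ ρ in Ioc (0 : ℝ) r,
            (β * f ρ * u ρ ^ 2 + γ * ρ ^ 2 * f ρ * (f ρ ^ 2 - 1)) :=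
  rsq_fprime_representation_general β γ hβ hγ u f f' hu_cont hf_cont hu01 hf01 heq hfin
end

section
/- Let β > 0, γ ≥ 0, and let u, f be continuous real-valued functions on (0,∞) with 0 ≤ u ≤ 1, 0 ≤ f ≤ 1, lim_{r→0} u(r) = 1, f twice continuously differentiable on (0,∞) satisfying (r² f'(r))' = β f(r) u(r)² + γ r² f(r)(f(r)² − 1) for all r > 0, and ∫₀^∞ r² f'(r)² dr < ∞. Then lim_{r→0} f(r) = 0. -/
open MeasureTheory Filter Set Topology

/-!
Near the origin `u ≥ 3/4` and `γ r² ≤ β/4`, so the right-hand side of the equation is at least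
`(β/4) f ≥ 0` and `g = r² f'` is nondecreasing on some `(0, r₀)`. A negative value `g(a) < 0` would
give `r² f'² = g²/r² ≥ g(a)²/r²` on `(0, a)`, contradicting the finite energy; hence `f' ≥ 0` and `f`
decreases to a limit `ℓ ≥ 0` as `r → 0`. If `ℓ > 0`, the right-hand side is at least `c = βℓ/4`,
so `g(r) ≥ c r`, i.e. `f'(r) ≥ c / r`, and `f(r) ≤ f(b) - c log (b / r) → -∞`, which is absurd.
-/

lemma monotoneOn_Ioo_of_hasDerivAt_nonneg {f f' : ℝ → ℝ} {a b : ℝ}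
    (hf : ∀ x ∈ Ioo a b, HasDerivAt f (f' x) x) (hf' : ∀ x ∈ Ioo a b, 0 ≤ f' x) :
    MonotoneOn f (Ioo a b) :=
  monotoneOn_of_hasDerivWithinAt_nonneg (convex_Ioo a b)
    (fun x hx => (hf x hx).continuousAt.continuousWithinAt)
    (fun x hx => (hf x (interior_subset hx)).hasDerivWithinAt)
    (fun x hx => hf' x (interior_subset hx))

lemma not_integrableOn_Ioo_const_div_sq {c t : ℝ} (hc : c ≠ 0) (ht : 0 < t) :
    ¬ IntegrableOn (fun x : ℝ => c / x ^ 2) (Ioo 0 t) := by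
  intro h
  have hpow : IntegrableOn (fun x : ℝ => x ^ (-2 : ℝ)) (Ioo 0 t) := by
    refine IntegrableOn.congr_fun (h.const_mul c⁻¹) (fun x hx => ?_) measurableSet_Ioo
    rw [Real.rpow_neg hx.1.le, Real.rpow_two]
    field_simp
  rw [intervalIntegral.integrableOn_Ioo_rpow_iff ht] at hpow
  norm_num at hpow

lemma MonotoneOn.nonneg_of_integrableOn_sq_div_sq {g : ℝ → ℝ} {a : ℝ}
    (hg : MonotoneOn g (Ioo 0 a)) (hint : IntegrableOn (fun x => g x ^ 2 / x ^ 2) (Ioo 0 a)) :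
    ∀ b ∈ Ioo 0 a, 0 ≤ g b := by
  intro b hb
  by_contra! hgb
  refine not_integrableOn_Ioo_const_div_sq (pow_ne_zero 2 hgb.ne) hb.1 ?_
  refine (hint.mono_set (Ioo_subset_Ioo_right hb.2.le)).mono'
    (by fun_prop : Measurable fun x : ℝ => g b ^ 2 / x ^ 2).aestronglyMeasurable ?_
  filter_upwards [ae_restrict_mem measurableSet_Ioo] with x hx
  have hgx : g x ≤ g b := hg ⟨hx.1, hx.2.trans hb.2⟩ hb hx.2.le
  rw [Real.norm_of_nonneg (by positivity)]
  exact div_le_div_of_nonneg_right (by nlinarith) (sq_nonneg x)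

lemma mul_le_of_le_hasDerivAt {g g' : ℝ → ℝ} {a c : ℝ}
    (hg : ∀ x ∈ Ioo 0 a, HasDerivAt g (g' x) x) (hcg : ∀ x ∈ Ioo 0 a, c ≤ g' x)
    (hg0 : ∀ x ∈ Ioo 0 a, 0 ≤ g x) : ∀ x ∈ Ioo 0 a, c * x ≤ g x := by
  have hmono : MonotoneOn (fun x => g x - c * x) (Ioo 0 a) :=
    monotoneOn_Ioo_of_hasDerivAt_nonneg (f' := fun x => g' x - c)
      (fun x hx => ((hg x hx).sub ((hasDerivAt_id' x).const_mul c)).congr_deriv (by ring))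
      (fun x hx => sub_nonneg.2 (hcg x hx))
  intro x hx
  have hlim : Tendsto (fun s => c * x - c * s) (𝓝[>] 0) (𝓝 (c * x)) := by
    have hcont : Continuous fun s : ℝ => c * x - c * s := by fun_prop
    exact (hcont.tendsto' 0 _ (by simp)).mono_left nhdsWithin_le_nhds
  refine le_of_tendsto hlim ?_
  filter_upwards [Ioo_mem_nhdsGT hx.1] with s hs
  have := hmono ⟨hs.1, hs.2.trans hx.2⟩ hx hs.2.le
  linarith [hg0 s ⟨hs.1, hs.2.trans hx.2⟩]

lemma tendsto_atBot_of_div_le_hasDerivAt {f f' : ℝ → ℝ} {a c : ℝ} (ha : 0 < a) (hc : 0 < c)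
    (hf : ∀ x ∈ Ioo 0 a, HasDerivAt f (f' x) x) (hf' : ∀ x ∈ Ioo 0 a, c / x ≤ f' x) :
    Tendsto f (𝓝[>] 0) atBot := by
  have hmono : MonotoneOn (fun x => f x - c * Real.log x) (Ioo 0 a) :=
    monotoneOn_Ioo_of_hasDerivAt_nonneg (f' := fun x => f' x - c / x)
      (fun x hx => ((hf x hx).sub ((Real.hasDerivAt_log hx.1.ne').const_mul c)).congr_deriv
        (by rw [div_eq_mul_inv]))
      (fun x hx => sub_nonneg.2 (hf' x hx))
  set b := a / 2
  have hb : b ∈ Ioo 0 a := ⟨half_pos ha, half_lt_self ha⟩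
  refine tendsto_atBot_mono' _ ?_ (tendsto_atBot_add_const_left _ (f b - c * Real.log b)
    (Real.tendsto_log_nhdsGT_zero.const_mul_atBot hc))
  filter_upwards [Ioo_mem_nhdsGT hb.1] with x hx
  have := hmono ⟨hx.1, hx.2.trans hb.2⟩ hb hx.2.le
  linarith

lemma quarter_mul_le_source {β k f u : ℝ} (hf : 0 ≤ f) (hu : 3 / 4 ≤ u) (hk : 0 ≤ k)
    (hkβ : k ≤ β / 4) : β / 4 * f ≤ β * f * u ^ 2 + k * f * (f ^ 2 - 1) := by
  have hu2 : 1 / 2 ≤ u ^ 2 := by nlinarith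
  have hβf : 0 ≤ β * f := mul_nonneg (by linarith) hf
  nlinarith [mul_le_mul_of_nonneg_left hu2 hβf, mul_nonneg (mul_nonneg hk hf) (sq_nonneg f),
    mul_le_mul_of_nonneg_right hkβ hf]

lemma exists_Ioo_quarter_mul_le_source {β γ : ℝ} {u f : ℝ → ℝ} (hβ : 0 < β) (hγ : 0 ≤ γ)
    (hf : ∀ r, 0 < r → 0 ≤ f r) (hu : Tendsto u (𝓝[>] 0) (𝓝 1)) :
    ∃ r₀ > 0, ∀ r ∈ Ioo 0 r₀,
      β / 4 * f r ≤ β * f r * u r ^ 2 + γ * r ^ 2 * f r * (f r ^ 2 - 1) := by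
  have hu_ev : ∀ᶠ r in 𝓝[>] 0, 3 / 4 ≤ u r := hu.eventually (eventually_ge_nhds (by norm_num))
  have hγ_ev : ∀ᶠ r in 𝓝[>] (0 : ℝ), γ * r ^ 2 < β / 4 := by
    have : Tendsto (fun r : ℝ => γ * r ^ 2) (𝓝[>] 0) (𝓝 0) := by
      have hcont : Continuous fun r : ℝ => γ * r ^ 2 := by fun_prop
      exact (hcont.tendsto' 0 0 (by simp)).mono_left nhdsWithin_le_nhds
    exact this.eventually (eventually_lt_nhds (by positivity))
  obtain ⟨r₀, hr₀, hsub⟩ := mem_nhdsGT_iff_exists_Ioo_subset.1 (hu_ev.and hγ_ev)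
  exact ⟨r₀, hr₀, fun r hr => quarter_mul_le_source (hf r hr.1) (hsub hr).1 (by positivity)
    (hsub hr).2.le⟩

theorem f_vanishes_at_origin_general (β γ : ℝ) (hβ : 0 < β) (hγ : 0 ≤ γ)
    (u f f' : ℝ → ℝ)
    (hf01 : ∀ r : ℝ, 0 < r → 0 ≤ f r ∧ f r ≤ 1)
    (hu0 : Tendsto u (𝓝[>] (0 : ℝ)) (𝓝 1))
    (hf' : ∀ r : ℝ, 0 < r → HasDerivAt f (f' r) r)
    (heq : ∀ r : ℝ, 0 < r →
      HasDerivAt (fun s : ℝ => s ^ 2 * f' s)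
        (β * f r * u r ^ 2 + γ * r ^ 2 * f r * (f r ^ 2 - 1)) r)
    (hfin : IntegrableOn (fun r : ℝ => r ^ 2 * f' r ^ 2) (Ioi 0)) :
    Tendsto f (𝓝[>] (0 : ℝ)) (𝓝 0) := by
  have hf0 : ∀ r, 0 < r → 0 ≤ f r := fun r hr => (hf01 r hr).1
  obtain ⟨r₀, hr₀, hsrc⟩ := exists_Ioo_quarter_mul_le_source hβ hγ hf0 hu0
  have hg_mono : MonotoneOn (fun s => s ^ 2 * f' s) (Ioo 0 r₀) :=
    monotoneOn_Ioo_of_hasDerivAt_nonneg (fun r hr => heq r hr.1)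
      (fun r hr => (mul_nonneg (by positivity) (hf0 r hr.1)).trans (hsrc r hr))
  have hg_nonneg : ∀ r ∈ Ioo 0 r₀, 0 ≤ r ^ 2 * f' r :=
    hg_mono.nonneg_of_integrableOn_sq_div_sq <|
      (hfin.mono_set Ioo_subset_Ioi_self).congr_fun
        (fun r hr => by field_simp [hr.1.ne']) measurableSet_Ioo
  have hf_mono : MonotoneOn f (Ioo 0 r₀) :=
    monotoneOn_Ioo_of_hasDerivAt_nonneg (fun r hr => hf' r hr.1)
      (fun r hr => (mul_nonneg_iff_of_pos_left (by positivity [hr.1])).1 (hg_nonneg r hr))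
  have hbdd : BddBelow (f '' Ioo 0 r₀) := ⟨0, by rintro _ ⟨r, hr, rfl⟩; exact hf0 r hr.1⟩
  set ℓ := sInf (f '' Ioo 0 r₀)
  have hlim : Tendsto f (𝓝[>] 0) (𝓝 ℓ) :=
    hf_mono.tendsto_nhdsWithin_Ioo_right (nonempty_Ioo.2 hr₀) hbdd
  rcases (ge_of_tendsto hlim (eventually_nhdsWithin_of_forall hf0)).eq_or_lt with hℓ | hℓ
  · rwa [← hℓ] at hlim
  have hgrowth : ∀ r ∈ Ioo 0 r₀, β / 4 * ℓ * r ≤ r ^ 2 * f' r :=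
    mul_le_of_le_hasDerivAt (fun r hr => heq r hr.1) (fun r hr =>
      (mul_le_mul_of_nonneg_left (csInf_le hbdd (mem_image_of_mem f hr)) (by positivity)).trans
        (hsrc r hr)) hg_nonneg
  have hbot : Tendsto f (𝓝[>] 0) atBot :=
    tendsto_atBot_of_div_le_hasDerivAt (c := β / 4 * ℓ) hr₀ (by positivity) (fun r hr => hf' r hr.1)
      (fun r hr => by rw [div_le_iff₀ hr.1]; nlinarith [hgrowth r hr, hr.1])
  exact (hlim.not_tendsto (disjoint_nhds_atBot ℓ) hbot).elim

/-- for a solution of `(r² f')' = β f u² + γ r² f(f²−1)` with `0 ≤ u,f ≤ 1`,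
`u → 1` at `0⁺` and finite weighted Dirichlet integral, the regularity boundary
condition `lim_{r→0⁺} f(r) = 0` holds. -/
theorem f_vanishes_at_origin (β γ : ℝ) (hβ : 0 < β) (hγ : 0 ≤ γ)
    (u f f' : ℝ → ℝ)
    (hu_cont : ContinuousOn u (Ioi 0))
    (hf_cont : ContinuousOn f (Ioi 0))
    (hu01 : ∀ r : ℝ, 0 < r → 0 ≤ u r ∧ u r ≤ 1)
    (hf01 : ∀ r : ℝ, 0 < r → 0 ≤ f r ∧ f r ≤ 1)
    (hu0 : Tendsto u (𝓝[>] (0 : ℝ)) (𝓝 1))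
    (hf' : ∀ r : ℝ, 0 < r → HasDerivAt f (f' r) r)
    (heq : ∀ r : ℝ, 0 < r →
      HasDerivAt (fun s : ℝ => s ^ 2 * f' s)
        (β * f r * u r ^ 2 + γ * r ^ 2 * f r * (f r ^ 2 - 1)) r)
    (hfin : IntegrableOn (fun r : ℝ => r ^ 2 * f' r ^ 2) (Ioi 0)) :
    Tendsto f (𝓝[>] (0 : ℝ)) (𝓝 0) :=
  f_vanishes_at_origin_general β γ hβ hγ u f f' hf01 hu0 hf' heq hfin
end

section
/- ∫₀^∞ (r/sinh r)² (coth r − 1/r)² dr = (1/3)(π²/6 − 1). -/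
/-!
Expanding `x² / sinh² x = ∑ₙ 4 n x² e^{-2 n x}` and integrating termwise gives
`∫₀^∞ x² / sinh² x = ∑ 1 / n² = π² / 6`. The integrand differs from `x² / (3 sinh² x)` by an
exact derivative: `F x = (cosh x (sinh² x + x²) - 2 x sinh x) / (3 sinh³ x)` satisfies
`F' = x² / (3 sinh² x) - (x / sinh x)² (coth x - 1 / x)²`,
with `F (0⁺) = 0` and `F (∞) = 1 / 3`.
-/

open MeasureTheory Set Real Filter Topology
open scoped Nat

noncomputable section

namespace Real

lemma integral_pow_mul_exp_neg_mul_Ioi (k : ℕ) {c : ℝ} (hc : 0 < c) :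
    ∫ x in Ioi (0 : ℝ), x ^ k * exp (-(c * x)) = k ! / c ^ (k + 1) := by
  have h := integral_rpow_mul_exp_neg_mul_Ioi (a := ((k + 1 : ℕ) : ℝ)) (by positivity) hc
  rw [rpow_natCast, Nat.cast_add_one, Gamma_nat_eq_factorial, add_sub_cancel_right] at h
  simp only [rpow_natCast] at h
  rw [h, one_div_pow, one_div_mul_eq_div]

lemma hasSum_sq_div_sinh_sq {x : ℝ} (hx : 0 < x) :
    HasSum (fun n : ℕ => 4 * n * (x ^ 2 * exp (-(2 * n * x)))) (x ^ 2 / sinh x ^ 2) := by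
  have hy : ‖exp (-x) ^ 2‖ < 1 := by
    rw [norm_pow, norm_of_nonneg (exp_pos _).le]
    exact pow_lt_one₀ (exp_pos _).le (exp_lt_one_iff.2 (neg_lt_zero.2 hx)) two_ne_zero
  have hterm (n : ℕ) :
      4 * n * (x ^ 2 * exp (-(2 * n * x))) = 4 * x ^ 2 * (n * (exp (-x) ^ 2) ^ n) := by
    rw [← pow_mul, ← exp_nat_mul]; push_cast; ring_nf
  have hsum : 4 * x ^ 2 * (exp (-x) ^ 2 / (1 - exp (-x) ^ 2) ^ 2) = x ^ 2 / sinh x ^ 2 := by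
    have hy1 : 1 - exp (-x) ^ 2 ≠ 0 := (sub_pos.2 (by simpa using hy)).ne'
    rw [sinh_eq, exp_neg]
    rw [exp_neg] at hy1
    field_simp
    ring
  rw [← hsum]
  exact ((hasSum_coe_mul_geometric_of_norm_lt_one hy).mul_left (4 * x ^ 2)).congr_fun hterm

theorem integral_sq_div_sinh_sq : ∫ x in Ioi (0 : ℝ), x ^ 2 / sinh x ^ 2 = π ^ 2 / 6 := by
  set F : ℕ → ℝ → ℝ := fun n x => 4 * n * (x ^ 2 * exp (-(2 * n * x)))
  have hF (n : ℕ) : ∫ x in Ioi 0, F n x = 1 / n ^ 2 := by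
    rcases n.eq_zero_or_pos with rfl | hn
    · simp [F]
    have hn' : (0 : ℝ) < n := Nat.cast_pos.2 hn
    rw [integral_const_mul, integral_pow_mul_exp_neg_mul_Ioi 2 (by positivity)]
    field_simp
    ring
  have hF_int (n : ℕ) : IntegrableOn (F n) (Ioi 0) := by
    rcases n.eq_zero_or_pos with rfl | hn
    · simp [F]
    refine Integrable.of_integral_ne_zero ?_
    rw [hF]
    positivity
  have hF_norm (n : ℕ) : ∫ x in Ioi 0, ‖F n x‖ = 1 / n ^ 2 := by
    have hF_nonneg (x : ℝ) : 0 ≤ F n x := by positivity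
    simp_rw [norm_of_nonneg (hF_nonneg _), hF]
  calc ∫ x in Ioi (0 : ℝ), x ^ 2 / sinh x ^ 2 = ∫ x in Ioi 0, ∑' n, F n x :=
        setIntegral_congr_fun measurableSet_Ioi fun x hx => (hasSum_sq_div_sinh_sq hx).tsum_eq.symm
    _ = ∑' n, ∫ x in Ioi 0, F n x := (integral_tsum_of_summable_integral_norm hF_int
        (hasSum_zeta_two.summable.congr fun n => (hF_norm n).symm)).symm
    _ = π ^ 2 / 6 := by simp_rw [hF]; exact hasSum_zeta_two.tsum_eq

lemma integrableOn_sq_div_sinh_sq : IntegrableOn (fun x : ℝ => x ^ 2 / sinh x ^ 2) (Ioi 0) :=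
  Integrable.of_integral_ne_zero (by rw [integral_sq_div_sinh_sq]; positivity)

lemma sinh_le_mul_cosh {x : ℝ} (hx : 0 ≤ x) : sinh x ≤ x * cosh x := by
  have hmono : MonotoneOn (fun t => t * cosh t - sinh t) (Ici 0) := by
    refine monotoneOn_of_hasDerivWithinAt_nonneg (convex_Ici 0) (by fun_prop)
      (f' := fun t => t * sinh t) (fun t _ => ?_) fun t ht => ?_
    · have h : HasDerivAt (fun t => t * cosh t - sinh t) (1 * cosh t + t * sinh t - cosh t) t :=
        ((hasDerivAt_id' t).mul (hasDerivAt_cosh t)).sub (hasDerivAt_sinh t)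
      exact (h.congr_deriv (by ring)).hasDerivWithinAt
    · rw [interior_Ici] at ht
      exact mul_nonneg (le_of_lt ht) (sinh_nonneg_iff.2 (le_of_lt ht))
  simpa using hmono self_mem_Ici hx hx

lemma mul_exp_neg_le_sinh {x : ℝ} (hx : 0 ≤ x) : x * exp (-x) ≤ sinh x :=
  calc x * exp (-x) ≤ x * 1 := mul_le_mul_of_nonneg_left (exp_le_one_iff.2 (by linarith)) hx
    _ = x := mul_one x
    _ ≤ sinh x := self_le_sinh_iff.2 hx

lemma cosh_div_sinh_sub_one_div_mem_Icc {x : ℝ} (hx : 0 < x) :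
    cosh x / sinh x - 1 / x ∈ Icc 0 1 := by
  have hs : 0 < sinh x := sinh_pos_iff.2 hx
  rw [div_sub_div _ _ hs.ne' hx.ne', mem_Icc, div_nonneg_iff, div_le_one (by positivity)]
  have h₁ := sinh_le_mul_cosh hx.le
  have h₂ := mul_exp_neg_le_sinh hx.le
  rw [← cosh_sub_sinh] at h₂
  constructor
  · left; constructor <;> nlinarith
  · nlinarith

lemma tendsto_sinh_atTop : Tendsto sinh atTop atTop :=
  tendsto_atTop_mono' atTop ((eventually_ge_atTop 0).mono fun _ hx => self_le_sinh_iff.2 hx)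
    tendsto_id

lemma tendsto_cosh_div_sinh_atTop : Tendsto (fun x => cosh x / sinh x) atTop (𝓝 1) := by
  have h := (tendsto_exp_neg_atTop_nhds_zero.mul tendsto_sinh_atTop.inv_tendsto_atTop).const_add 1
  rw [mul_zero, add_zero] at h
  refine h.congr' ((eventually_gt_atTop 0).mono fun x hx => ?_)
  have := (sinh_pos_iff.2 hx).ne'
  rw [Pi.inv_apply, ← cosh_sub_sinh]
  field_simp
  ring

lemma tendsto_self_div_sinh_atTop : Tendsto (fun x => x / sinh x) atTop (𝓝 0) := by
  have h := (tendsto_pow_mul_exp_neg_atTop_nhds_zero 1).mul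
    (tendsto_cosh_div_sinh_atTop.add_const 1)
  rw [zero_mul] at h
  refine h.congr' ((eventually_gt_atTop 0).mono fun x hx => ?_)
  have := (sinh_pos_iff.2 hx).ne'
  rw [div_add_one this, cosh_add_sinh, mul_div_assoc', mul_assoc, ← exp_add, neg_add_cancel,
    exp_zero, pow_one, mul_one]

end Real

lemma integrableOn_bps_integrand :
    IntegrableOn (fun r : ℝ => (r / sinh r) ^ 2 * (cosh r / sinh r - 1 / r) ^ 2) (Ioi 0) := by
  refine integrableOn_sq_div_sinh_sq.mono' (by fun_prop) ?_
  filter_upwards [ae_restrict_mem measurableSet_Ioi] with x hx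
  obtain ⟨h₀, h₁⟩ := cosh_div_sinh_sub_one_div_mem_Icc hx
  rw [norm_of_nonneg (by positivity), ← div_pow]
  exact mul_le_of_le_one_right (by positivity) (pow_le_one₀ h₀ h₁)

/-- At `0` the division by `sinh 0 = 0` makes this `0`, which is also its limit from the right. -/
def bpsPrimitive (x : ℝ) : ℝ :=
  (cosh x * (sinh x ^ 2 + x ^ 2) - 2 * x * sinh x) / (3 * sinh x ^ 3)

lemma hasDerivAt_bpsPrimitive {x : ℝ} (hx : x ≠ 0) :
    HasDerivAt bpsPrimitive
      (x ^ 2 / sinh x ^ 2 / 3 - (x / sinh x) ^ 2 * (cosh x / sinh x - 1 / x) ^ 2) x := by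
  have hs : sinh x ≠ 0 := sinh_ne_zero.2 hx
  have h := (((hasDerivAt_cosh x).fun_mul (((hasDerivAt_sinh x).fun_pow 2).fun_add
    (hasDerivAt_pow 2 x))).fun_sub (((hasDerivAt_id' x).const_mul 2).fun_mul
    (hasDerivAt_sinh x))).fun_div (((hasDerivAt_sinh x).fun_pow 3).const_mul 3) (by simp [hs])
  refine h.congr_deriv ?_
  field_simp
  linear_combination (-sinh x ^ 4) * cosh_sq x

lemma bpsPrimitive_mem_Icc {x : ℝ} (hx : 0 < x) :
    bpsPrimitive x ∈ Icc 0 (sinh x * (cosh x * (cosh x - 1) + 2) / (3 * (cosh x + 1))) := by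
  have hs : 0 < sinh x := sinh_pos_iff.2 hx
  have hc : 0 ≤ cosh x - 1 := sub_nonneg.2 (one_le_cosh x)
  have hxs : x ≤ sinh x := self_le_sinh_iff.2 hx.le
  have h₀ : 0 ≤ sinh x - x := sub_nonneg.2 hxs
  have h₁ : sinh x - x ≤ sinh x * (cosh x - 1) := by nlinarith [sinh_le_mul_cosh hx.le]
  have hN : cosh x * (sinh x ^ 2 + x ^ 2) - 2 * x * sinh x =
      cosh x * (sinh x - x) ^ 2 + 2 * x * sinh x * (cosh x - 1) := by ring
  have hN_le : cosh x * (sinh x - x) ^ 2 + 2 * x * sinh x * (cosh x - 1) ≤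
      sinh x ^ 2 * (cosh x - 1) * (cosh x * (cosh x - 1) + 2) :=
    calc _ ≤ cosh x * (sinh x * (cosh x - 1)) ^ 2 + 2 * sinh x * sinh x * (cosh x - 1) := by
          gcongr
      _ = _ := by ring
  rw [bpsPrimitive, hN, mem_Icc]
  constructor
  · positivity
  · rw [div_le_div_iff₀ (by positivity) (by positivity)]
    calc _ ≤ sinh x ^ 2 * (cosh x - 1) * (cosh x * (cosh x - 1) + 2) * (3 * (cosh x + 1)) := by
          gcongr
      _ = _ := by linear_combination 3 * sinh x ^ 2 * (cosh x * (cosh x - 1) + 2) * cosh_sq x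

lemma tendsto_bpsPrimitive_nhdsGT_zero : Tendsto bpsPrimitive (𝓝[>] 0) (𝓝 0) := by
  have hg : Continuous fun x => sinh x * (cosh x * (cosh x - 1) + 2) / (3 * (cosh x + 1)) := by
    refine Continuous.div (by fun_prop) (by fun_prop) fun x => ?_
    have := cosh_pos x
    positivity
  have hg0 := (hg.tendsto 0).mono_left (nhdsWithin_le_nhds (s := Ioi 0))
  simp only [sinh_zero, zero_mul, zero_div] at hg0
  exact tendsto_of_tendsto_of_tendsto_of_le_of_le' tendsto_const_nhds hg0
    (eventually_nhdsWithin_of_forall fun x hx => (bpsPrimitive_mem_Icc hx).1)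
    (eventually_nhdsWithin_of_forall fun x hx => (bpsPrimitive_mem_Icc hx).2)

lemma tendsto_bpsPrimitive_atTop : Tendsto bpsPrimitive atTop (𝓝 (1 / 3)) := by
  have h := ((tendsto_cosh_div_sinh_atTop.mul
    ((tendsto_self_div_sinh_atTop.pow 2).const_add 1)).sub
    ((tendsto_self_div_sinh_atTop.const_mul 2).mul
      tendsto_sinh_atTop.inv_tendsto_atTop)).div_const 3
  norm_num at h
  refine h.congr' ((eventually_gt_atTop 0).mono fun x hx => ?_)
  have := (sinh_pos_iff.2 hx).ne'
  rw [bpsPrimitive]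
  field_simp

/-- the Prasad--Sommerfield integral
`∫₀^∞ (r/sinh r)² (coth r − 1/r)² dr = (1/3)(π²/6 − 1)`. -/
theorem bps_profile_integral :
    (∫ r in Ioi (0 : ℝ),
        (r / Real.sinh r) ^ 2 * (Real.cosh r / Real.sinh r - 1 / r) ^ 2) =
      1 / 3 * (Real.pi ^ 2 / 6 - 1) := by
  have hF₀ : bpsPrimitive 0 = 0 := by simp [bpsPrimitive]
  have hF_cont : ContinuousWithinAt bpsPrimitive (Ici 0) 0 := by
    rw [← continuousWithinAt_Ioi_iff_Ici, ContinuousWithinAt, hF₀]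
    exact tendsto_bpsPrimitive_nhdsGT_zero
  have hg := integrableOn_sq_div_sinh_sq.div_const 3
  have hFTC := integral_Ioi_of_hasDerivAt_of_tendsto hF_cont
    (fun x hx => hasDerivAt_bpsPrimitive (ne_of_gt hx)) (hg.sub integrableOn_bps_integrand)
    tendsto_bpsPrimitive_atTop
  rw [integral_sub hg integrableOn_bps_integrand, integral_div, integral_sq_div_sinh_sq, hF₀,
    sub_zero] at hFTC
  linarith
end
end
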